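/- arXiv:2511.20987 — 4 statements merged into one kernel-verified Lean document; each statement's English description precedes it below -/
import Mathlib

section
/- The number of North-East lattice paths from (0,0) to (2n,2n) that avoid all points (2i-1, 2i-1) for 1 ≤ i ≤ 2n equals the Catalan number C_{2n}. -/
/-- A 0/1 word: 1 = North step, 0 = East step. -/
def IsWord (l : List ℕ) : Prop := ∀ x ∈ l, x = 0 ∨ x = 1

open Finset

/-- prefix count -/
def cnt (c : ℕ) (l : List ℕ) (t : ℕ) : ℕ := ((l.take t).count c)

lemma cnt_zero (c : ℕ) (l : List ℕ) : cnt c l 0 = 0 := rfl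

lemma cnt_of_le (c : ℕ) {l : List ℕ} {t : ℕ} (h : l.length ≤ t) :
    cnt c l t = l.count c := by
  simp [cnt, List.take_of_length_le h]

lemma cnt_le_count (c : ℕ) (l : List ℕ) (t : ℕ) : cnt c l t ≤ l.count c :=
  (List.take_sublist t l).count_le c

lemma cnt_mono (c : ℕ) (l : List ℕ) {s t : ℕ} (h : s ≤ t) : cnt c l s ≤ cnt c l t := by
  have : l.take s = (l.take t).take s := by rw [List.take_take, min_eq_left h]
  rw [cnt, this]
  exact (List.take_sublist s (l.take t)).count_le c

lemma cnt_succ_le (c : ℕ) (l : List ℕ) (t : ℕ) : cnt c l (t+1) ≤ cnt c l t + 1 := by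
  unfold cnt
  rw [List.take_succ, List.count_append]
  have : (l[t]?.toList).count c ≤ 1 := by
    cases h : l[t]? with
    | none => simp
    | some v => simp only [Option.toList_some, List.count_singleton]; split <;> omega
  omega

lemma isword_sublist {l l' : List ℕ} (h : l'.Sublist l) (hw : IsWord l) : IsWord l' :=
  fun x hx => hw x (h.subset hx)

lemma word_count_sum {l : List ℕ} (hw : IsWord l) : l.count 0 + l.count 1 = l.length := by
  induction l with
  | nil => simp
  | cons a l ih =>
    have ha := hw a (by simp)
    have hl : IsWord l := fun x hx => hw x (List.mem_cons_of_mem a hx)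
    rcases ha with h | h <;> subst h <;>
      · simp only [List.count_cons, List.length_cons, ← ih hl]
        simp
        omega

lemma cnt_sum {l : List ℕ} (hw : IsWord l) (t : ℕ) :
    cnt 0 l t + cnt 1 l t = min t l.length := by
  have := word_count_sum (isword_sublist (List.take_sublist t l) hw)
  rwa [List.length_take] at this

lemma cnt_append (c : ℕ) (u v : List ℕ) (t : ℕ) :
    cnt c (u ++ v) t = cnt c u t + cnt c v (t - u.length) := by
  rw [cnt, List.take_append, List.count_append]; rfl

lemma cnt_drop (c : ℕ) (l : List ℕ) (r t : ℕ) :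
    cnt c l (r + t) = cnt c l r + cnt c (l.drop r) t := by
  rw [cnt, List.take_add, List.count_append]; rfl

lemma cnt_take (c : ℕ) (l : List ℕ) {r t : ℕ} (h : t ≤ r) :
    cnt c (l.take r) t = cnt c l t := by
  rw [cnt, List.take_take, min_eq_left h]; rfl

/-- all 0/1 words of length L -/
def words : ℕ → Finset (List ℕ)
  | 0 => {[]}
  | L+1 => ((words L).image (List.cons 0)) ∪ ((words L).image (List.cons 1))

lemma mem_words {l : List ℕ} {L : ℕ} : l ∈ words L ↔ IsWord l ∧ l.length = L := by
  induction L generalizing l with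
  | zero =>
    simp only [words, Finset.mem_singleton]
    constructor
    · rintro rfl; exact ⟨fun x hx => by simp at hx, rfl⟩
    · rintro ⟨_, h⟩; exact List.length_eq_zero_iff.mp h
  | succ L ih =>
    simp only [words, Finset.mem_union, Finset.mem_image]
    constructor
    · rintro (⟨w, hw, rfl⟩ | ⟨w, hw, rfl⟩) <;>
      · obtain ⟨h1, h2⟩ := ih.mp hw
        refine ⟨?_, by simp [h2]⟩
        intro x hx
        rcases List.mem_cons.mp hx with rfl | hx
        · simp
        · exact h1 x hx
    · rintro ⟨h1, h2⟩
      cases l with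
      | nil => simp at h2
      | cons a w =>
        have ha := h1 a (by simp)
        have hw : w ∈ words L := ih.mpr ⟨fun x hx => h1 x (List.mem_cons_of_mem a hx), by simpa using h2⟩
        rcases ha with rfl | rfl
        · exact Or.inl ⟨w, hw, rfl⟩
        · exact Or.inr ⟨w, hw, rfl⟩
def DyckP (l : List ℕ) : Prop := ∀ t, cnt 0 l t ≤ cnt 1 l t
def PrimA (l : List ℕ) : Prop := ∀ t, 0 < t → t < l.length → cnt 0 l t < cnt 1 l t
def PrimB (l : List ℕ) : Prop := ∀ t, 0 < t → t < l.length → cnt 1 l t < cnt 0 l t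
def AvoidP (l : List ℕ) : Prop := ∀ t, cnt 1 l t = cnt 0 l t → Even (cnt 1 l t)

open Classical in
noncomputable def dSet (m : ℕ) : Finset (List ℕ) :=
  (words (2*m)).filter (fun l => l.count 1 = m ∧ DyckP l)
open Classical in
noncomputable def pSet (m : ℕ) : Finset (List ℕ) :=
  (words (2*m)).filter (fun l => l.count 1 = m ∧ PrimA l)
open Classical in
noncomputable def qSet (m : ℕ) : Finset (List ℕ) :=
  (words (2*m)).filter (fun l => l.count 1 = m ∧ PrimB l)
open Classical in
noncomputable def aSet (n : ℕ) : Finset (List ℕ) :=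
  (words (4*n)).filter (fun l => l.count 1 = 2*n ∧ AvoidP l)

lemma mem_dSet {l m} : l ∈ dSet m ↔ (IsWord l ∧ l.length = 2*m) ∧ l.count 1 = m ∧ DyckP l := by
  simp [dSet, Finset.mem_filter, mem_words]
lemma mem_pSet {l m} : l ∈ pSet m ↔ (IsWord l ∧ l.length = 2*m) ∧ l.count 1 = m ∧ PrimA l := by
  simp [pSet, Finset.mem_filter, mem_words]
lemma mem_qSet {l m} : l ∈ qSet m ↔ (IsWord l ∧ l.length = 2*m) ∧ l.count 1 = m ∧ PrimB l := by
  simp [qSet, Finset.mem_filter, mem_words]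
lemma mem_aSet {l n} : l ∈ aSet n ↔ (IsWord l ∧ l.length = 4*n) ∧ l.count 1 = 2*n ∧ AvoidP l := by
  simp [aSet, Finset.mem_filter, mem_words]

lemma count0_of_word {l : List ℕ} {m : ℕ} (hw : IsWord l) (hl : l.length = 2*m)
    (hc : l.count 1 = m) : l.count 0 = m := by
  have := word_count_sum hw; omega

/-- first return time to the diagonal -/
noncomputable def fr (l : List ℕ) : ℕ := sInf {t | 0 < t ∧ cnt 1 l t = cnt 0 l t}

lemma fr_spec {l : List ℕ} (hw : IsWord l) (hb : l.count 1 = l.count 0)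
    (hpos : 0 < l.length) :
    0 < fr l ∧ fr l ≤ l.length ∧ cnt 1 l (fr l) = cnt 0 l (fr l) ∧
      ∀ t, 0 < t → t < fr l → cnt 1 l t ≠ cnt 0 l t := by
  have hmem : l.length ∈ {t | 0 < t ∧ cnt 1 l t = cnt 0 l t} := by
    refine ⟨hpos, ?_⟩
    rw [cnt_of_le _ le_rfl, cnt_of_le _ le_rfl, hb]
  have hne : {t | 0 < t ∧ cnt 1 l t = cnt 0 l t}.Nonempty := ⟨_, hmem⟩
  have h1 := Nat.sInf_mem hne
  refine ⟨h1.1, Nat.sInf_le hmem, h1.2, fun t ht htr h => ?_⟩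
  exact Nat.notMem_of_lt_sInf htr ⟨ht, h⟩

lemma fr_eq {l : List ℕ} {r : ℕ} (h0 : 0 < r) (heq : cnt 1 l r = cnt 0 l r)
    (hlt : ∀ t, 0 < t → t < r → cnt 1 l t ≠ cnt 0 l t) : fr l = r := by
  have h1 : fr l ≤ r := Nat.sInf_le ⟨h0, heq⟩
  rcases lt_or_eq_of_le h1 with h | h
  · have h2 := Nat.sInf_mem (⟨r, h0, heq⟩ : {t | 0 < t ∧ cnt 1 l t = cnt 0 l t}.Nonempty)
    exact absurd h2.2 (hlt _ h2.1 h)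
  · exact h

lemma sign_helper {l : List ℕ} {r : ℕ} (c c' : ℕ)
    (hne : ∀ t, 0 < t → t < r → cnt c' l t ≠ cnt c l t)
    (h1 : cnt c l 1 < cnt c' l 1) :
    ∀ t, 0 < t → t < r → cnt c l t < cnt c' l t := by
  intro t
  induction t with
  | zero => omega
  | succ t ih =>
    intro _ htr
    rcases Nat.eq_zero_or_pos t with rfl | ht
    · exact h1
    · have h2 := ih ht (by omega)
      have h3 := cnt_succ_le c l t
      have h4 := cnt_mono c' l (show t ≤ t+1 by omega)
      have h5 := hne (t+1) (by omega) htr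
      omega

lemma sign_const {l : List ℕ} {r : ℕ}
    (hne : ∀ t, 0 < t → t < r → cnt 1 l t ≠ cnt 0 l t) :
    (∀ t, 0 < t → t < r → cnt 0 l t < cnt 1 l t) ∨
    (∀ t, 0 < t → t < r → cnt 1 l t < cnt 0 l t) := by
  by_cases hr : r ≤ 1
  · left; omega
  · have h1 := hne 1 one_pos (by omega)
    rcases Nat.lt_or_ge (cnt 0 l 1) (cnt 1 l 1) with h | h
    · exact Or.inl (sign_helper 0 1 hne h)
    · have : cnt 1 l 1 < cnt 0 l 1 := lt_of_le_of_ne h h1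
      exact Or.inr (sign_helper 1 0 (fun t a b => (hne t a b).symm) this)

lemma dyck_of_prim {l : List ℕ} {m : ℕ} (h : l ∈ pSet m) : DyckP l := by
  obtain ⟨⟨hw, hl⟩, hc, hp⟩ := mem_pSet.mp h
  intro t
  rcases Nat.eq_zero_or_pos t with rfl | ht
  · simp [cnt_zero]
  rcases Nat.lt_or_ge t l.length with h2 | h2
  · exact le_of_lt (hp t ht h2)
  · rw [cnt_of_le _ h2, cnt_of_le _ h2, hc, count0_of_word hw hl hc]
lemma cnt_cons_self (x : ℕ) (w : List ℕ) (t : ℕ) :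
    cnt x (x :: w) (t+1) = 1 + cnt x w t := by
  unfold cnt
  rw [List.take_succ_cons, List.count_cons]
  simp
  omega

lemma cnt_cons_ne {x c : ℕ} (h : x ≠ c) (w : List ℕ) (t : ℕ) :
    cnt c (x :: w) (t+1) = cnt c w t := by
  unfold cnt
  rw [List.take_succ_cons, List.count_cons]
  simp [h]

lemma cnt_concat_le (c : ℕ) (u : List ℕ) (y : ℕ) {t : ℕ} (h : t ≤ u.length) :
    cnt c (u ++ [y]) t = cnt c u t := by
  rw [cnt_append]
  have : t - u.length = 0 := by omega
  rw [this, cnt_zero]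
  omega

lemma i_mem {l : List ℕ} {m : ℕ} (h : l ∈ dSet m) : (1 :: (l ++ [0])) ∈ pSet (m+1) := by
  obtain ⟨⟨hw, hl⟩, hc, hd⟩ := mem_dSet.mp h
  have hc0 : l.count 0 = m := count0_of_word hw hl hc
  refine mem_pSet.mpr ⟨⟨?_, by simp [hl]; ring⟩, ?_, ?_⟩
  · intro x hx
    rcases List.mem_cons.mp hx with rfl | hx
    · right; rfl
    rcases List.mem_append.mp hx with hx | hx
    · exact hw x hx
    · left; simpa using hx
  · simp [List.count_cons, List.count_append, hc]
  · intro t ht htl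
    simp only [List.length_cons, List.length_append, List.length_singleton,
      List.length_nil, hl] at htl
    obtain ⟨s, rfl⟩ : ∃ s, t = s + 1 := ⟨t - 1, by omega⟩
    rw [cnt_cons_ne (by norm_num), cnt_cons_self,
      cnt_concat_le _ _ _ (by omega), cnt_concat_le _ _ _ (by omega)]
    have := hd s
    omega

lemma j_mem {l' : List ℕ} {m : ℕ} (h : l' ∈ pSet (m+1)) :
    l'.tail.dropLast ∈ dSet m ∧ 1 :: (l'.tail.dropLast ++ [0]) = l' := by
  obtain ⟨⟨hw, hl⟩, hc, hp⟩ := mem_pSet.mp h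
  have hc0 : l'.count 0 = m+1 := count0_of_word hw hl hc
  obtain ⟨x, w, rfl⟩ : ∃ x w, l' = x :: w := by
    cases l' with
    | nil => simp at hl
    | cons x w => exact ⟨x, w, rfl⟩
  have hx : x = 1 := by
    have h1 := hp 1 one_pos (by simp [List.length_cons] at hl ⊢; omega)
    rcases hw x (by simp) with rfl | rfl
    · exfalso
      have e0 : cnt 0 (0 :: w) (0+1) = 1 + cnt 0 w 0 := cnt_cons_self 0 w 0
      have e1 : cnt 1 (0 :: w) (0+1) = cnt 1 w 0 := cnt_cons_ne (by norm_num) w 0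
      simp only [Nat.zero_add] at e0 e1
      rw [e0, e1, cnt_zero, cnt_zero] at h1
      omega
    · rfl
  subst hx
  have hwlen : w.length = 2*m + 1 := by simp at hl; omega
  obtain ⟨u, y, rfl⟩ : ∃ u y, w = u ++ [y] := by
    rcases List.eq_nil_or_concat w with rfl | ⟨u, y, hconcat⟩
    · simp at hwlen
    · exact ⟨u, y, by rw [hconcat, List.concat_eq_append]⟩
  have hulen : u.length = 2*m := by simp at hwlen; omega
  have huw : IsWord u := fun z hz => hw z (by simp [hz])
  have hkey : cnt 0 (1 :: (u ++ [y])) (2*m+1) < cnt 1 (1 :: (u ++ [y])) (2*m+1) :=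
    hp (2*m+1) (by omega) (by
      simp only [List.length_cons, List.length_append, List.length_singleton, hulen]; omega)
  have e0 : cnt 0 (1 :: (u ++ [y])) (2*m+1) = u.count 0 := by
    rw [show 2*m+1 = (2*m) + 1 from rfl, cnt_cons_ne (by norm_num),
      cnt_concat_le _ _ _ (by omega), cnt_of_le _ (by omega)]
  have e1 : cnt 1 (1 :: (u ++ [y])) (2*m+1) = 1 + u.count 1 := by
    rw [show 2*m+1 = (2*m) + 1 from rfl, cnt_cons_self,
      cnt_concat_le _ _ _ (by omega), cnt_of_le _ (by omega)]
  have etot1 : m + 1 = 1 + u.count 1 + List.count 1 [y] := by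
    rw [← hc]; simp [List.count_cons, List.count_append]; omega
  have etot0 : m + 1 = u.count 0 + List.count 0 [y] := by
    rw [← hc0]; simp [List.count_cons, List.count_append]
  have hy : y = 0 := by
    rcases hw y (by simp) with rfl | rfl
    · rfl
    · exfalso
      simp at etot1 etot0
      rw [e0, e1] at hkey
      omega
  subst hy
  simp only [List.count_singleton] at etot1 etot0
  norm_num at etot1 etot0
  have hcu1 : u.count 1 = m := by omega
  have heq : (1 :: (u ++ [0])).tail.dropLast = u := by
    simp [List.dropLast_concat]
  rw [heq]
  refine ⟨mem_dSet.mpr ⟨⟨huw, hulen⟩, hcu1, ?_⟩, rfl⟩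
  intro t
  rcases Nat.lt_or_ge t (2*m) with ht | ht
  · have h1 := hp (t+1) (by omega) (by simp [hulen]; omega)
    rw [cnt_cons_ne (by norm_num), cnt_cons_self,
      cnt_concat_le _ _ _ (by omega), cnt_concat_le _ _ _ (by omega)] at h1
    omega
  · rw [cnt_of_le _ (by omega), cnt_of_le _ (by omega), hcu1,
      count0_of_word huw hulen hcu1]

lemma p_succ_eq_d (m : ℕ) : (pSet (m+1)).card = (dSet m).card :=
  Finset.card_nbij' (fun l' => l'.tail.dropLast) (fun l => 1 :: (l ++ [0]))
    (fun l' h => (j_mem h).1) (fun l h => i_mem h) (fun l' h => (j_mem h).2)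
    (fun l h => by simp [List.dropLast_concat])
def sw (l : List ℕ) : List ℕ := l.map (fun x => 1 - x)

lemma count_sw {w : List ℕ} (hw : IsWord w) :
    (sw w).count 1 = w.count 0 ∧ (sw w).count 0 = w.count 1 := by
  induction w with
  | nil => simp [sw]
  | cons a l ih =>
    have hl : IsWord l := fun x hx => hw x (List.mem_cons_of_mem a hx)
    obtain ⟨ih1, ih0⟩ := ih hl
    rcases hw a (by simp) with rfl | rfl <;>
      simp [sw, List.count_cons, List.map_cons] at ih1 ih0 ⊢ <;> omega

lemma sw_sw {w : List ℕ} (hw : IsWord w) : sw (sw w) = w := by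
  induction w with
  | nil => rfl
  | cons a l ih =>
    have hl : IsWord l := fun x hx => hw x (List.mem_cons_of_mem a hx)
    rcases hw a (by simp) with rfl | rfl <;> simp [sw, List.map_cons] at ih ⊢ <;>
      exact ih hl

lemma sw_word {w : List ℕ} (hw : IsWord w) : IsWord (sw w) := by
  intro x hx
  obtain ⟨y, hy, rfl⟩ := List.mem_map.mp hx
  rcases hw y hy with rfl | rfl
  · right; rfl
  · left; rfl

lemma sw_len (w : List ℕ) : (sw w).length = w.length := List.length_map _

lemma cnt_sw {l : List ℕ} (hw : IsWord l) (t : ℕ) :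
    cnt 1 (sw l) t = cnt 0 l t ∧ cnt 0 (sw l) t = cnt 1 l t := by
  have h1 : (sw l).take t = sw (l.take t) := List.map_take.symm
  have h2 := count_sw (isword_sublist (List.take_sublist t l) hw)
  unfold cnt
  rw [h1]
  exact h2

lemma sw_mem_q {l : List ℕ} {m : ℕ} (h : l ∈ pSet m) : sw l ∈ qSet m := by
  obtain ⟨⟨hw, hl⟩, hc, hp⟩ := mem_pSet.mp h
  refine mem_qSet.mpr ⟨⟨sw_word hw, by rw [sw_len, hl]⟩, ?_, ?_⟩
  · rw [(count_sw hw).1, count0_of_word hw hl hc]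
  · intro t ht htl
    rw [(cnt_sw hw t).1, (cnt_sw hw t).2]
    exact hp t ht (by rwa [sw_len] at htl)

lemma sw_mem_p {l : List ℕ} {m : ℕ} (h : l ∈ qSet m) : sw l ∈ pSet m := by
  obtain ⟨⟨hw, hl⟩, hc, hp⟩ := mem_qSet.mp h
  refine mem_pSet.mpr ⟨⟨sw_word hw, by rw [sw_len, hl]⟩, ?_, ?_⟩
  · rw [(count_sw hw).1, count0_of_word hw hl hc]
  · intro t ht htl
    rw [(cnt_sw hw t).1, (cnt_sw hw t).2]
    exact hp t ht (by rwa [sw_len] at htl)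

lemma q_card_eq (m : ℕ) : (qSet m).card = (pSet m).card :=
  Finset.card_nbij' sw sw (fun l h => sw_mem_p h) (fun l h => sw_mem_q h)
    (fun l h => sw_sw (mem_qSet.mp h).1.1) (fun l h => sw_sw (mem_pSet.mp h).1.1)
lemma prim_facts {u : List ℕ} {m : ℕ} (hu : u ∈ pSet m ∪ qSet m) :
    IsWord u ∧ u.length = 2*m ∧ u.count 1 = m ∧ u.count 0 = m ∧
      ∀ t, 0 < t → t < u.length → cnt 1 u t ≠ cnt 0 u t := by
  rcases Finset.mem_union.mp hu with h | h
  · obtain ⟨⟨hw, hl⟩, hc, hp⟩ := mem_pSet.mp h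
    exact ⟨hw, hl, hc, count0_of_word hw hl hc, fun t ht htl => (hp t ht htl).ne'⟩
  · obtain ⟨⟨hw, hl⟩, hc, hp⟩ := mem_qSet.mp h
    exact ⟨hw, hl, hc, count0_of_word hw hl hc, fun t ht htl => (hp t ht htl).ne⟩

lemma fr_append {u v : List ℕ} {m : ℕ} (hm : 1 ≤ m) (hu : u ∈ pSet m ∪ qSet m) :
    fr (u ++ v) = u.length ∧ cnt 1 (u ++ v) u.length = m := by
  obtain ⟨hw, hl, hc1, hc0, hne⟩ := prim_facts hu
  have e : ∀ c t, t ≤ u.length → cnt c (u ++ v) t = cnt c u t := by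
    intro c t ht
    rw [cnt_append]
    have : t - u.length = 0 := by omega
    rw [this, cnt_zero]
    omega
  have heq : cnt 1 (u ++ v) u.length = m := by
    rw [e 1 _ le_rfl, cnt_of_le _ le_rfl, hc1]
  refine ⟨fr_eq (by omega) ?_ ?_, heq⟩
  · rw [heq, e 0 _ le_rfl, cnt_of_le _ le_rfl, hc0]
  · intro t ht htu
    rw [e 1 _ (le_of_lt htu), e 0 _ (le_of_lt htu)]
    exact hne t ht htu

lemma append_counts {u v : List ℕ} {c : ℕ} :
    (u ++ v).count c = u.count c + v.count c := List.count_append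

lemma take_drop_counts {l : List ℕ} {r : ℕ} (c : ℕ) (hr : r ≤ l.length) :
    l.count c = cnt c l r + (l.drop r).count c := by
  conv_lhs => rw [← List.take_append_drop r l]
  rw [List.count_append]
  rfl

/-- forward decomposition: general facts about take/drop at first return -/
lemma split_facts {l : List ℕ} (hw : IsWord l) (hb : l.count 1 = l.count 0)
    (hpos : 0 < l.length) :
    ∃ k, 1 ≤ k ∧ fr l = 2*k ∧ cnt 1 l (fr l) = k ∧ cnt 0 l (fr l) = k ∧
      2*k ≤ l.length ∧ k ≤ l.count 1 := by
  obtain ⟨h0, hle, heq, hmin⟩ := fr_spec hw hb hpos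
  set r := fr l with hr
  have hsum := cnt_sum hw r
  rw [min_eq_left hle] at hsum
  refine ⟨cnt 1 l r, by omega, by omega, rfl, by omega, by omega, cnt_le_count 1 l r⟩

lemma take_mem_prim {l : List ℕ} (hw : IsWord l) {k : ℕ}
    (hr2 : fr l = 2*k) (hc1 : cnt 1 l (fr l) = k) (hlen : 2*k ≤ l.length)
    (hside : ∀ t, 0 < t → t < fr l → cnt 0 l t < cnt 1 l t) :
    l.take (fr l) ∈ pSet k := by
  refine mem_pSet.mpr ⟨⟨isword_sublist (List.take_sublist _ l) hw, ?_⟩, ?_, ?_⟩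
  · rw [List.length_take]; omega
  · rw [← hc1]; rfl
  · intro t ht htl
    rw [List.length_take] at htl
    have htr : t < fr l := by omega
    rw [cnt_take _ _ (le_of_lt htr), cnt_take _ _ (le_of_lt htr)]
    exact hside t ht htr

lemma take_mem_prim' {l : List ℕ} (hw : IsWord l) {k : ℕ}
    (hr2 : fr l = 2*k) (hc1 : cnt 1 l (fr l) = k) (hlen : 2*k ≤ l.length)
    (hside : ∀ t, 0 < t → t < fr l → cnt 1 l t < cnt 0 l t) :
    l.take (fr l) ∈ qSet k := by
  have hc0 : cnt 0 l (fr l) = k := by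
    have hsum := cnt_sum hw (fr l)
    rw [min_eq_left (by omega)] at hsum
    omega
  refine mem_qSet.mpr ⟨⟨isword_sublist (List.take_sublist _ l) hw, ?_⟩, ?_, ?_⟩
  · rw [List.length_take]; omega
  · rw [← hc1]; rfl
  · intro t ht htl
    rw [List.length_take] at htl
    have htr : t < fr l := by omega
    rw [cnt_take _ _ (le_of_lt htr), cnt_take _ _ (le_of_lt htr)]
    exact hside t ht htr

lemma cnt_drop_fr {l : List ℕ} {k : ℕ} (hr2 : fr l = 2*k)
    (hc1 : cnt 1 l (fr l) = k) (hc0 : cnt 0 l (fr l) = k) :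
    (∀ t, cnt 1 (l.drop (fr l)) t + k = cnt 1 l (fr l + t)) ∧
    (∀ t, cnt 0 (l.drop (fr l)) t + k = cnt 0 l (fr l + t)) := by
  constructor <;> intro t
  · have := cnt_drop 1 l (fr l) t; omega
  · have := cnt_drop 0 l (fr l) t; omega

/-- Dyck first-return recursion -/
lemma d_rec (m : ℕ) :
    (dSet (m+1)).card = ∑ k ∈ Finset.range (m+1), (pSet (k+1)).card * (dSet (m-k)).card := by
  have hrw : ∑ k ∈ Finset.range (m+1), (pSet (k+1)).card * (dSet (m-k)).card
      = ((Finset.range (m+1)).sigma (fun k => pSet (k+1) ×ˢ dSet (m-k))).card := by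
    rw [Finset.card_sigma]
    exact Finset.sum_congr rfl fun k _ => (Finset.card_product _ _).symm
  rw [hrw]
  · refine Finset.card_nbij'
      (fun l => ⟨cnt 1 l (fr l) - 1, (l.take (fr l), l.drop (fr l))⟩)
      (fun x => x.2.1 ++ x.2.2) ?_ ?_ ?_ ?_
    · -- forward membership
      intro l hl
      dsimp only
      obtain ⟨⟨hw, hlen⟩, hc, hd⟩ := mem_dSet.mp hl
      have hc0 : l.count 0 = m+1 := count0_of_word hw hlen hc
      obtain ⟨k, hk1, hr2, hcc1, hcc0, hle, hkc⟩ :=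
        split_facts hw (by omega) (by omega)
      obtain ⟨_, _, _, hmin⟩ := fr_spec hw (by omega) (by omega)
      have hside : ∀ t, 0 < t → t < fr l → cnt 0 l t < cnt 1 l t := by
        intro t ht htr
        exact lt_of_le_of_ne (hd t) (fun h => hmin t ht htr h.symm)
      rw [Finset.mem_coe, Finset.mem_sigma, Finset.mem_product]
      dsimp only
      refine ⟨Finset.mem_range.mpr (by omega), ?_, ?_⟩
      · have : k - 1 + 1 = k := by omega
        rw [hcc1, this]
        exact take_mem_prim hw hr2 hcc1 hle hside
      · have hd' := cnt_drop_fr hr2 hcc1 hcc0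
        have hcnt : (l.drop (fr l)).count 1 = m + 1 - k := by
          have := take_drop_counts 1 (show fr l ≤ l.length by omega)
          omega
        have : m - (cnt 1 l (fr l) - 1) = m + 1 - k := by rw [hcc1]; omega
        rw [this]
        refine mem_dSet.mpr ⟨⟨isword_sublist (List.drop_sublist _ l) hw, ?_⟩, hcnt, ?_⟩
        · rw [List.length_drop]; omega
        · intro t
          have h1 := (hd'.1) t
          have h0 := (hd'.2) t
          have := hd (fr l + t)
          omega
    · -- backward membership
      rintro ⟨k, u, v⟩ hx
      dsimp only
      rw [Finset.mem_coe, Finset.mem_sigma, Finset.mem_product] at hx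
      dsimp only at hx ⊢
      obtain ⟨hk, hu, hv⟩ := hx
      rw [Finset.mem_range] at hk
      obtain ⟨hwv, hlv⟩ := (mem_dSet.mp hv).1
      have hcv := (mem_dSet.mp hv).2.1
      have hdv := (mem_dSet.mp hv).2.2
      obtain ⟨hwu, hlu, hcu1, hcu0, _⟩ := prim_facts (Finset.mem_union_left _ hu)
      have hdu : DyckP u := dyck_of_prim hu
      refine mem_dSet.mpr ⟨⟨?_, ?_⟩, ?_, ?_⟩
      · intro x hxx
        rcases List.mem_append.mp hxx with h | h
        exacts [hwu x h, hwv x h]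
      · rw [List.length_append]; omega
      · rw [append_counts]; omega
      · intro t
        rw [cnt_append, cnt_append]
        rcases le_or_gt t u.length with h | h
        · have : t - u.length = 0 := by omega
          rw [this, cnt_zero, cnt_zero]
          have := hdu t
          omega
        · have e1 : cnt 1 u t = u.count 1 := cnt_of_le _ (by omega)
          have e0 : cnt 0 u t = u.count 0 := cnt_of_le _ (by omega)
          rw [e1, e0, hcu1, hcu0]
          have := hdv (t - u.length)
          omega
    · -- left inverse
      intro l hl
      exact List.take_append_drop _ l
    · -- right inverse
      rintro ⟨k, u, v⟩ hx
      dsimp only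
      rw [Finset.mem_coe, Finset.mem_sigma, Finset.mem_product] at hx
      dsimp only at hx ⊢
      obtain ⟨hk, hu, hv⟩ := hx
      obtain ⟨hfr, hcnt⟩ := fr_append (by omega) (Finset.mem_union_left _ hu)
      show (⟨cnt 1 (u ++ v) (fr (u ++ v)) - 1,
        ((u ++ v).take (fr (u ++ v)), (u ++ v).drop (fr (u ++ v)))⟩ :
          Σ _ : ℕ, List ℕ × List ℕ) = ⟨k, (u, v)⟩
      rw [hfr, hcnt, List.take_left, List.drop_left]
      norm_num
lemma a_rec (n : ℕ) :
    (aSet (n+1)).card = ∑ k ∈ Finset.range (n+1),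
      (pSet (2*k+2) ∪ qSet (2*k+2)).card * (aSet (n-k)).card := by
  have hrw : ∑ k ∈ Finset.range (n+1), (pSet (2*k+2) ∪ qSet (2*k+2)).card * (aSet (n-k)).card
      = ((Finset.range (n+1)).sigma
          (fun k => (pSet (2*k+2) ∪ qSet (2*k+2)) ×ˢ aSet (n-k))).card := by
    rw [Finset.card_sigma]
    exact Finset.sum_congr rfl fun k _ => (Finset.card_product _ _).symm
  rw [hrw]
  refine Finset.card_nbij'
    (fun l => ⟨cnt 1 l (fr l) / 2 - 1, (l.take (fr l), l.drop (fr l))⟩)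
    (fun x => x.2.1 ++ x.2.2) ?_ ?_ ?_ ?_
  · -- forward membership
    intro l hl
    obtain ⟨⟨hw, hlen⟩, hc, ha⟩ := mem_aSet.mp hl
    have hlen' : l.length = 2*(2*(n+1)) := by omega
    have hc0 : l.count 0 = 2*(n+1) := count0_of_word hw hlen' hc
    obtain ⟨k', hk1, hr2, hcc1, hcc0, hle, hkc⟩ :=
      split_facts hw (by omega) (by omega)
    obtain ⟨hfp, hfl, hfe, hmin⟩ := fr_spec hw (by omega) (by omega)
    have hEv : Even k' := by rw [← hcc1]; exact ha _ (by omega)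
    rw [Nat.even_iff] at hEv
    have hk2 : 2 ≤ k' := by omega
    have hkn : k' ≤ 2*(n+1) := by omega
    have hidx : k' / 2 - 1 < n + 1 := by omega
    have h2idx : 2*(k'/2 - 1) + 2 = k' := by omega
    rw [Finset.mem_coe, Finset.mem_sigma, Finset.mem_product]
    dsimp only
    rw [hcc1]
    refine ⟨Finset.mem_range.mpr hidx, ?_, ?_⟩
    · rw [h2idx]
      rcases sign_const hmin with hside | hside
      · exact Finset.mem_union_left _ (take_mem_prim hw hr2 hcc1 hle hside)
      · exact Finset.mem_union_right _ (take_mem_prim' hw hr2 hcc1 hle hside)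
    · have hd' := cnt_drop_fr hr2 hcc1 hcc0
      have hcnt : (l.drop (fr l)).count 1 = 2*(n+1) - k' := by
        have := take_drop_counts 1 (show fr l ≤ l.length by omega)
        omega
      have hnk : n - (k'/2 - 1) = (n + 1) - k'/2 := by omega
      refine mem_aSet.mpr ⟨⟨isword_sublist (List.drop_sublist _ l) hw, ?_⟩, ?_, ?_⟩
      · rw [List.length_drop]; omega
      · rw [hcnt]; omega
      · intro t heq
        have h1 := (hd'.1) t
        have h0 := (hd'.2) t
        have he : cnt 1 l (fr l + t) = cnt 0 l (fr l + t) := by omega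
        have := ha _ he
        rw [Nat.even_iff] at this ⊢
        omega
  · -- backward membership
    rintro ⟨k, u, v⟩ hx
    rw [Finset.mem_coe, Finset.mem_sigma, Finset.mem_product] at hx
    dsimp only at hx ⊢
    obtain ⟨hk, hu, hv⟩ := hx
    rw [Finset.mem_range] at hk
    obtain ⟨⟨hwv, hlv⟩, hcv, hav⟩ := mem_aSet.mp hv
    obtain ⟨hwu, hlu, hcu1, hcu0, hne⟩ := prim_facts hu
    refine mem_aSet.mpr ⟨⟨?_, ?_⟩, ?_, ?_⟩
    · intro x hxx
      rcases List.mem_append.mp hxx with h | h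
      exacts [hwu x h, hwv x h]
    · rw [List.length_append]; omega
    · rw [append_counts]; omega
    · intro t heq
      rw [cnt_append] at heq ⊢
      rcases le_or_gt t u.length with h | h
      · have h0 : t - u.length = 0 := by omega
        rw [h0, cnt_zero] at heq ⊢
        rw [cnt_append, h0, cnt_zero] at heq
        rcases Nat.eq_zero_or_pos t with rfl | ht
        · rw [cnt_zero]; exact Even.zero
        rcases eq_or_lt_of_le h with he | hlt
        · rw [he, cnt_of_le _ le_rfl, hcu1]
          exact ⟨k+1, by ring⟩
        · exact absurd (by omega : cnt 1 u t = cnt 0 u t) (hne t ht hlt)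
      · have e1 : cnt 1 u t = u.count 1 := cnt_of_le _ (by omega)
        have e0 : cnt 0 u t = u.count 0 := cnt_of_le _ (by omega)
        rw [cnt_append, e1, e0, hcu1, hcu0] at heq
        rw [e1, hcu1]
        have hev := hav (t - u.length) (by omega)
        rw [Nat.even_iff] at hev ⊢
        omega
  · intro l hl
    exact List.take_append_drop _ l
  · rintro ⟨k, u, v⟩ hx
    rw [Finset.mem_coe, Finset.mem_sigma, Finset.mem_product] at hx
    dsimp only at hx ⊢
    obtain ⟨hk, hu, hv⟩ := hx
    obtain ⟨hfr, hcnt⟩ := fr_append (by omega) hu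
    show (⟨cnt 1 (u ++ v) (fr (u ++ v)) / 2 - 1,
      ((u ++ v).take (fr (u ++ v)), (u ++ v).drop (fr (u ++ v)))⟩ :
        Σ _ : ℕ, List ℕ × List ℕ) = ⟨k, (u, v)⟩
    rw [hfr, hcnt, List.take_left, List.drop_left]
    congr 1
    omega
lemma dSet_zero : dSet 0 = {[]} := by
  ext l
  simp only [mem_dSet, Finset.mem_singleton]
  constructor
  · rintro ⟨⟨_, hl⟩, _⟩
    exact List.length_eq_zero_iff.mp (by omega)
  · rintro rfl
    refine ⟨⟨fun x hx => by simp at hx, rfl⟩, rfl, fun t => ?_⟩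
    simp [cnt]

lemma aSet_zero : aSet 0 = {[]} := by
  ext l
  simp only [mem_aSet, Finset.mem_singleton]
  constructor
  · rintro ⟨⟨_, hl⟩, _⟩
    exact List.length_eq_zero_iff.mp (by omega)
  · rintro rfl
    refine ⟨⟨fun x hx => by simp at hx, rfl⟩, rfl, fun t h => ?_⟩
    simp [cnt]

lemma catalan_succ_range (m : ℕ) :
    catalan (m+1) = ∑ k ∈ Finset.range (m+1), catalan k * catalan (m-k) := by
  rw [catalan_succ', Finset.Nat.sum_antidiagonal_eq_sum_range_succ_mk]

lemma d_catalan : ∀ m, (dSet m).card = catalan m := by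
  intro m
  induction m using Nat.strong_induction_on with
  | _ m ih =>
    match m with
    | 0 => rw [dSet_zero]; simp [catalan_zero]
    | m+1 =>
      rw [d_rec, catalan_succ_range]
      refine Finset.sum_congr rfl fun k hk => ?_
      rw [Finset.mem_range] at hk
      rw [p_succ_eq_d, ih k (by omega), ih (m-k) (by omega)]

lemma sum_range_pair (f : ℕ → ℕ) (N : ℕ) :
    ∑ i ∈ Finset.range (2*N), f i = ∑ k ∈ Finset.range N, (f (2*k) + f (2*k+1)) := by
  induction N with
  | zero => simp
  | succ N ih =>
    have h2 : 2*(N+1) = (2*N+1)+1 := by ring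
    rw [h2, Finset.sum_range_succ, Finset.sum_range_succ, ih, Finset.sum_range_succ]
    omega

lemma catalan_even_identity (n : ℕ) :
    catalan (2*(n+1)) = ∑ k ∈ Finset.range (n+1), 2 * (catalan (2*k+1) * catalan (2*(n-k))) := by
  have h2 : 2*(n+1) = (2*n+1)+1 := by ring
  have h1 : catalan (2*(n+1)) = ∑ i ∈ Finset.range (2*(n+1)),
      (fun i => catalan i * catalan (2*n+1-i)) i := by
    rw [h2, catalan_succ_range]
  rw [h1, sum_range_pair (fun i => catalan i * catalan (2*n+1-i)) (n+1),
    Finset.sum_add_distrib]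
  have hA : ∑ k ∈ Finset.range (n+1), (fun i => catalan i * catalan (2*n+1-i)) (2*k)
      = ∑ k ∈ Finset.range (n+1), (fun i => catalan i * catalan (2*n+1-i)) (2*k+1) := by
    rw [← Finset.sum_range_reflect (fun k => (fun i => catalan i * catalan (2*n+1-i)) (2*k)) (n+1)]
    refine Finset.sum_congr rfl fun k hk => ?_
    rw [Finset.mem_range] at hk
    dsimp only
    have e1 : 2*(n+1-1-k) = 2*(n-k) := by omega
    have e2 : 2*n+1-2*(n-k) = 2*k+1 := by omega
    have e3 : 2*n+1-(2*k+1) = 2*(n-k) := by omega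
    rw [e1, e2, e3, Nat.mul_comm]
  rw [hA, ← two_mul, Finset.mul_sum]
  refine Finset.sum_congr rfl fun k hk => ?_
  rw [Finset.mem_range] at hk
  dsimp only
  have e3 : 2*n+1-(2*k+1) = 2*(n-k) := by omega
  rw [e3]

lemma a_catalan : ∀ n, (aSet n).card = catalan (2*n) := by
  intro n
  induction n using Nat.strong_induction_on with
  | _ n ih =>
    match n with
    | 0 => rw [aSet_zero]; simp [catalan_zero]
    | n+1 =>
      rw [a_rec, catalan_even_identity]
      refine Finset.sum_congr rfl fun k hk => ?_
      rw [Finset.mem_range] at hk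
      have hdisj : Disjoint (pSet (2*k+2)) (qSet (2*k+2)) := by
        rw [Finset.disjoint_left]
        intro l hp hq
        obtain ⟨⟨_, hl⟩, _, hpa⟩ := mem_pSet.mp hp
        obtain ⟨_, _, hpb⟩ := mem_qSet.mp hq
        have h1 := hpa 1 one_pos (by omega)
        have h2 := hpb 1 one_pos (by omega)
        omega
      rw [Finset.card_union_of_disjoint hdisj, q_card_eq,
        p_succ_eq_d, d_catalan, ih (n-k) (by omega)]
      ring
theorem odd_diagonal_avoiding_count (n : ℕ) :
    Nat.card {l : List ℕ // IsWord l ∧ l.length = 4 * n ∧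
      l.count 1 = 2 * n ∧ l.count 0 = 2 * n ∧
      ∀ i, 1 ≤ i → i ≤ 2 * n → ∀ t,
        ¬((l.take t).count 0 = 2 * i - 1 ∧ (l.take t).count 1 = 2 * i - 1)} =
    catalan (2 * n) := by
  have hiff : ∀ l : List ℕ,
      (IsWord l ∧ l.length = 4 * n ∧ l.count 1 = 2 * n ∧ l.count 0 = 2 * n ∧
        ∀ i, 1 ≤ i → i ≤ 2 * n → ∀ t,
          ¬((l.take t).count 0 = 2 * i - 1 ∧ (l.take t).count 1 = 2 * i - 1))
      ↔ l ∈ aSet n := by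
    intro l
    rw [mem_aSet]
    constructor
    · rintro ⟨hw, hlen, hc1, hc0, havoid⟩
      refine ⟨⟨hw, hlen⟩, hc1, ?_⟩
      intro t ht
      by_contra hodd
      rw [Nat.even_iff] at hodd
      have hle : cnt 1 l t ≤ 2 * n := hc1 ▸ cnt_le_count 1 l t
      set v := cnt 1 l t with hv
      have h1 : 1 ≤ (v+1)/2 := by omega
      have h2 : (v+1)/2 ≤ 2*n := by omega
      refine havoid ((v+1)/2) h1 h2 t ⟨?_, ?_⟩
      · have e : cnt 0 l t = (l.take t).count 0 := rfl
        omega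
      · have e : cnt 1 l t = (l.take t).count 1 := rfl
        omega
    · rintro ⟨⟨hw, hlen⟩, hc1, ha⟩
      have hc0 : l.count 0 = 2*n := count0_of_word hw (by omega) hc1
      refine ⟨hw, hlen, hc1, hc0, ?_⟩
      rintro i h1 h2 t ⟨ha0, ha1⟩
      have heq : cnt 1 l t = cnt 0 l t := by
        show (l.take t).count 1 = (l.take t).count 0
        omega
      have := ha t heq
      rw [Nat.even_iff] at this
      have : (l.take t).count 1 % 2 = 1 := by omega
      have h3 : cnt 1 l t % 2 = 0 := by
        have := ha t heq; rwa [Nat.even_iff] at this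
      exact absurd h3 (by show ¬ (l.take t).count 1 % 2 = 0; omega)
  rw [Nat.card_congr (Equiv.subtypeEquivRight hiff), Nat.card_eq_finsetCard, a_catalan]
end

section
/- Define phi recursively on odd-diagonal-avoiding balanced words: phi of the empty word is empty; otherwise write P = U · V at the first return to height 0, and set phi(P) = 1 · X · 0 · phi(V) if U starts with 1 (where X = interior of U), and phi(P) = 1 · phi(V) · 0 · comp(X') if U starts with 0 (where X' = interior of U and comp is bitwise complement). Then phi(P) is a Dyck word of the same length as P. -/
def IsDyck (l : List ℕ) : Prop :=
  IsWord l ∧ l.count 1 = l.count 0 ∧ ∀ t, (l.take t).count 0 ≤ (l.take t).count 1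

def IsPrimitiveExcursion (l : List ℕ) : Prop :=
  IsWord l ∧ l ≠ [] ∧ l.count 1 = l.count 0 ∧
    ∀ t, 0 < t → t < l.length → (l.take t).count 1 ≠ (l.take t).count 0

def comp (l : List ℕ) : List ℕ := l.map (fun x => 1 - x)

/-- Every balanced prefix has length divisible by 4. -/
def OddDiagAvoiding (l : List ℕ) : Prop :=
  ∀ t, t ≤ l.length → (l.take t).count 1 = (l.take t).count 0 → 4 ∣ t

lemma count_take_succ (l : List ℕ) (n c : ℕ) :
    (l.take (n+1)).count c = (l.take n).count c + (l[n]?.toList).count c := by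
  rw [List.take_succ, List.count_append]

lemma sign_lemma (l : List ℕ) (hw : IsWord l)
    (hne : ∀ t, 0 < t → t < l.length → (l.take t).count 1 ≠ (l.take t).count 0)
    (x : ℕ) (hh : l.head? = some x) :
    ∀ t, 0 < t → t < l.length →
      (x = 1 → (l.take t).count 0 < (l.take t).count 1) ∧
      (x = 0 → (l.take t).count 1 < (l.take t).count 0) := by
  intro t
  induction t with
  | zero => omega
  | succ s ih =>
    intro _ hlt
    rcases Nat.eq_zero_or_pos s with rfl | hs
    · cases l with
      | nil => simp at hh
      | cons a l' =>
        simp at hh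
        subst hh
        constructor <;> rintro rfl <;> simp
    · have ihs := ih hs (by omega)
      have hs' : s < l.length := by omega
      have hx : l[s]? = some l[s] := List.getElem?_eq_getElem hs'
      have hx01 : l[s] = 0 ∨ l[s] = 1 := hw _ (List.getElem_mem hs')
      have h1 := count_take_succ l s 1
      have h0 := count_take_succ l s 0
      rw [hx] at h1 h0
      have hne' := hne (s+1) (by omega) hlt
      have hx01' : x = 0 ∨ x = 1 := by
        apply hw
        exact List.mem_of_mem_head? hh
      obtain ⟨ih1, ih2⟩ := ihs
      rcases hx01' with rfl | rfl
      · have key := ih2 rfl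
        refine ⟨fun hxx => by omega, fun _ => ?_⟩
        rcases hx01 with he | he <;> rw [he] at h1 h0 <;> simp at h1 h0 <;> omega
      · have key := ih1 rfl
        refine ⟨fun _ => ?_, fun hxx => by omega⟩
        rcases hx01 with he | he <;> rw [he] at h1 h0 <;> simp at h1 h0 <;> omega

lemma comp_word (l : List ℕ) : IsWord (comp l) := by
  intro x hx
  simp only [comp, List.mem_map] at hx
  obtain ⟨a, _, rfl⟩ := hx
  omega

lemma comp_counts (l : List ℕ) (hw : IsWord l) :
    (comp l).count 1 = l.count 0 ∧ (comp l).count 0 = l.count 1 := by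
  induction l with
  | nil => simp [comp]
  | cons a t ih =>
    have ha := hw a (by simp)
    have ih' := ih (fun y hy => hw y (by simp [hy]))
    rcases ha with rfl | rfl <;> simp [comp, List.count_cons] at * <;> omega

lemma comp_take (l : List ℕ) (s : ℕ) : (comp l).take s = comp (l.take s) := by
  simp [comp, List.map_take]

/-- structure of a primitive excursion starting with 1 -/
lemma prim_struct_pos (U : List ℕ) (h : IsPrimitiveExcursion U) (hh : U.head? = some 1) :
    ∃ X, U = 1 :: X ++ [0] ∧ IsDyck X ∧ (U.drop 1).dropLast = X := by
  obtain ⟨hw, hne, hbal, hint⟩ := h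
  obtain ⟨a, R, rfl⟩ : ∃ a R, U = a :: R := by
    cases U with
    | nil => exact absurd rfl hne
    | cons a R => exact ⟨a, R, rfl⟩
  simp at hh; subst hh
  have hRne : R ≠ [] := by
    rintro rfl; simp at hbal
  obtain ⟨X, y, hR⟩ : ∃ X y, R = X ++ [y] := ⟨R.dropLast, R.getLast hRne, (List.dropLast_append_getLast hRne).symm⟩
  subst hR
  have hsign := sign_lemma (1 :: X ++ [y]) hw hint 1 rfl
  have hlen : (1 :: X ++ [y]).length = X.length + 2 := by simp
  -- counts of whole
  have hbal' : 1 + X.count 1 + (if y = 1 then 1 else 0) = X.count 0 + (if y = 0 then 1 else 0) := by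
    simp [List.count_cons, List.count_append] at hbal
    rcases hw y (by simp) with rfl | rfl <;> simp_all <;> omega
  have hy01 : y = 0 ∨ y = 1 := hw y (by simp)
  -- prefix at length X.length + 1
  have hpre : ∀ s, s ≤ X.length → (1 :: X ++ [y]).take (s+1) = 1 :: X.take s := by
    intro s hs
    simp [List.take_append, List.take_cons, Nat.sub_eq_zero_of_le hs]
  have hlast := (hsign (X.length + 1) (by omega) (by omega)).1 rfl
  rw [hpre X.length le_rfl] at hlast
  simp [List.count_cons, List.take_length] at hlast
  -- y must be 0
  rcases hy01 with rfl | rfl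
  swap
  · simp at hbal'
    omega
  simp at hbal'
  have hXbal : X.count 1 = X.count 0 := by omega
  refine ⟨X, rfl, ⟨fun z hz => hw z (by simp [hz]), hXbal, ?_⟩, by simp⟩
  intro s
  by_cases hs : s < X.length
  · have hps := (hsign (s+1) (by omega) (by simp; omega)).1 rfl
    rw [hpre s (le_of_lt hs)] at hps
    simp [List.count_cons] at hps
    omega
  · rw [List.take_of_length_le (by omega)]
    omega

/-- structure of a primitive excursion starting with 0 -/
lemma prim_struct_neg (U : List ℕ) (h : IsPrimitiveExcursion U) (hh : U.head? = some 0) :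
    ∃ X, U = 0 :: X ++ [1] ∧ IsWord X ∧ X.count 1 = X.count 0 ∧
      (∀ s, (X.take s).count 1 ≤ (X.take s).count 0) ∧ (U.drop 1).dropLast = X := by
  obtain ⟨hw, hne, hbal, hint⟩ := h
  obtain ⟨a, R, rfl⟩ : ∃ a R, U = a :: R := by
    cases U with
    | nil => exact absurd rfl hne
    | cons a R => exact ⟨a, R, rfl⟩
  simp at hh; subst hh
  have hRne : R ≠ [] := by
    rintro rfl; simp at hbal
  obtain ⟨X, y, hR⟩ : ∃ X y, R = X ++ [y] := ⟨R.dropLast, R.getLast hRne, (List.dropLast_append_getLast hRne).symm⟩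
  subst hR
  have hsign := sign_lemma (0 :: X ++ [y]) hw hint 0 rfl
  have hbal' : X.count 1 + (if y = 1 then 1 else 0) = 1 + X.count 0 + (if y = 0 then 1 else 0) := by
    simp [List.count_cons, List.count_append] at hbal
    rcases hw y (by simp) with rfl | rfl <;> simp_all <;> omega
  have hy01 : y = 0 ∨ y = 1 := hw y (by simp)
  have hpre : ∀ s, s ≤ X.length → (0 :: X ++ [y]).take (s+1) = 0 :: X.take s := by
    intro s hs
    simp [List.take_append, List.take_cons, Nat.sub_eq_zero_of_le hs]
  have hlast := (hsign (X.length + 1) (by omega) (by simp)).2 rfl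
  rw [hpre X.length le_rfl] at hlast
  simp [List.count_cons, List.take_length] at hlast
  rcases hy01 with rfl | rfl
  · simp at hbal'
    omega
  simp at hbal'
  have hXbal : X.count 1 = X.count 0 := by omega
  refine ⟨X, rfl, fun z hz => hw z (by simp [hz]), hXbal, ?_, by simp⟩
  intro s
  by_cases hs : s < X.length
  · have hps := (hsign (s+1) (by omega) (by simp; omega)).2 rfl
    rw [hpre s (le_of_lt hs)] at hps
    simp [List.count_cons] at hps
    omega
  · rw [List.take_of_length_le (by omega)]
    omega

lemma comp_dyck (X : List ℕ) (hw : IsWord X) (hbal : X.count 1 = X.count 0)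
    (hpre : ∀ s, (X.take s).count 1 ≤ (X.take s).count 0) : IsDyck (comp X) := by
  refine ⟨comp_word X, ?_, ?_⟩
  · obtain ⟨h1, h0⟩ := comp_counts X hw
    omega
  · intro t
    rw [comp_take]
    have hwt : IsWord (X.take t) := fun z hz => hw z (List.mem_of_mem_take hz)
    obtain ⟨h1, h0⟩ := comp_counts _ hwt
    have := hpre t
    omega

lemma dyck_glue (A B : List ℕ) (hA : IsDyck A) (hB : IsDyck B) :
    IsDyck (1 :: A ++ 0 :: B) := by
  obtain ⟨hwA, hbA, hpA⟩ := hA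
  obtain ⟨hwB, hbB, hpB⟩ := hB
  refine ⟨?_, ?_, ?_⟩
  · intro z hz
    simp at hz
    rcases hz with rfl | hz | rfl | hz
    · right; rfl
    · exact hwA z hz
    · left; rfl
    · exact hwB z hz
  · simp [List.count_append, List.count_cons]
    omega
  · intro t
    cases t with
    | zero => simp
    | succ s =>
      have key : (1 :: A ++ 0 :: B).take (s+1) = 1 :: (A ++ 0 :: B).take s := rfl
      rw [key, List.take_append]
      by_cases hs : s ≤ A.length
      · rw [Nat.sub_eq_zero_of_le hs]
        have := hpA s
        simp [List.count_append, List.count_cons]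
        omega
      · push_neg at hs
        have h2 : s - A.length = (s - A.length - 1) + 1 := by omega
        rw [List.take_of_length_le (by omega), h2]
        have key2 : (0 :: B).take (s - A.length - 1 + 1) = 0 :: B.take (s - A.length - 1) := rfl
        rw [key2]
        have := hpB (s - A.length - 1)
        simp [List.count_append, List.count_cons]
        omega

theorem phi_maps_to_dyck (phi : List ℕ → List ℕ)
    (h_nil : phi [] = [])
    (h_above : ∀ U V : List ℕ, IsPrimitiveExcursion U → U.head? = some 1 →
      phi (U ++ V) = 1 :: (U.drop 1).dropLast ++ 0 :: phi V)
    (h_below : ∀ U V : List ℕ, IsPrimitiveExcursion U → U.head? = some 0 →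
      phi (U ++ V) = 1 :: phi V ++ 0 :: comp ((U.drop 1).dropLast))
    (P : List ℕ) (hw : IsWord P) (hbal : P.count 1 = P.count 0)
    (hoda : OddDiagAvoiding P) :
    IsDyck (phi P) ∧ (phi P).length = P.length := by
  clear hoda
  suffices H : ∀ n (P : List ℕ), P.length ≤ n → IsWord P → P.count 1 = P.count 0 →
      IsDyck (phi P) ∧ (phi P).length = P.length from H P.length P le_rfl hw hbal
  intro n
  induction n with
  | zero =>
    intro P hlen _ _
    have hPnil : P = [] := List.eq_nil_of_length_eq_zero (by omega)
    subst hPnil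
    rw [h_nil]
    exact ⟨⟨fun z hz => by simp at hz, rfl, fun t => by simp⟩, rfl⟩
  | succ n ih =>
    intro P hlen hwP hbalP
    rcases eq_or_ne P [] with rfl | hPne
    · rw [h_nil]
      exact ⟨⟨fun z hz => by simp at hz, rfl, fun t => by simp⟩, rfl⟩
    classical
    have hex : ∃ t, 0 < t ∧ t ≤ P.length ∧ (P.take t).count 1 = (P.take t).count 0 :=
      ⟨P.length, List.length_pos_iff.2 hPne, le_rfl, by rw [List.take_length]; exact hbalP⟩
    have hspec := Nat.find_spec hex
    set t0 := Nat.find hex with ht0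
    obtain ⟨ht0pos, ht0le, ht0bal⟩ := hspec
    set U := P.take t0 with hU
    set V := P.drop t0 with hV
    have hUV : U ++ V = P := List.take_append_drop _ _
    have hUlen : U.length = t0 := by rw [hU, List.length_take]; omega
    have hUw : IsWord U := fun z hz => hwP z (List.mem_of_mem_take hz)
    have hVw : IsWord V := fun z hz => hwP z (List.mem_of_mem_drop hz)
    have hUne : U ≠ [] := by
      intro h; rw [h] at hUlen; simp at hUlen; omega
    have hUprim : IsPrimitiveExcursion U := by
      refine ⟨hUw, hUne, ht0bal, ?_⟩
      intro t htpos htlt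
      have htake : U.take t = P.take t := by
        rw [hU, List.take_take]
        congr 1
        omega
      rw [htake]
      intro hcon
      exact Nat.find_min hex (show t < t0 by omega) ⟨htpos, by omega, hcon⟩
    have hVbal : V.count 1 = V.count 0 := by
      have h1 : U.count 1 + V.count 1 = P.count 1 := by rw [← hUV, List.count_append]
      have h0 : U.count 0 + V.count 0 = P.count 0 := by rw [← hUV, List.count_append]
      omega
    have hPlen : P.length = U.length + V.length := by rw [← hUV, List.length_append]
    have hVlen : V.length ≤ n := by omega
    obtain ⟨hVd, hVl⟩ := ih V hVlen hVw hVbal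
    obtain ⟨x, hx⟩ : ∃ x, U.head? = some x := by
      cases hUe : U with
      | nil => exact absurd hUe hUne
      | cons a R => exact ⟨a, by simp [hUe]⟩
    rcases hUw x (List.mem_of_mem_head? hx) with rfl | rfl
    · -- head 0 : below diagonal
      obtain ⟨X, hUeq, hXw, hXbal, hXpre, hXdrop⟩ := prim_struct_neg U hUprim hx
      have hphi := h_below U V hUprim hx
      rw [← hUV, hphi, hXdrop]
      refine ⟨dyck_glue _ _ hVd (comp_dyck X hXw hXbal hXpre), ?_⟩
      have hUl : U.length = X.length + 2 := by rw [hUeq]; simp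
      simp [comp]
      omega
    · -- head 1 : above diagonal
      obtain ⟨X, hUeq, hXd, hXdrop⟩ := prim_struct_pos U hUprim hx
      have hphi := h_above U V hUprim hx
      rw [← hUV, hphi, hXdrop]
      refine ⟨dyck_glue _ _ hXd hVd, ?_⟩
      have hUl : U.length = X.length + 2 := by rw [hUeq]; simp
      simp
      omega
end

section
/- The number of Dyck paths of semilength n equals the number of 321-avoiding permutations of {1,...,n}; i.e., there exists a bijection between these two sets. -/
def Avoids321 {n : ℕ} (σ : Equiv.Perm (Fin n)) : Prop :=
  ¬∃ i j k : Fin n, i < j ∧ j < k ∧ σ k < σ j ∧ σ j < σ i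

namespace Dyck321


def encAux : ℕ → List ℕ → List ℕ
  | _, [] => []
  | c, m :: ms => List.replicate (m - c) 1 ++ 0 :: encAux m ms

def decAux : ℕ → List ℕ → List ℕ
  | _, [] => []
  | c, 0 :: l => c :: decAux c l
  | c, (_+1) :: l => decAux (c+1) l

lemma dec_replicate (k : ℕ) : ∀ c l, decAux c (List.replicate k 1 ++ l) = decAux (c + k) l := by
  induction k with
  | zero => simp [decAux]
  | succ k ih => intro c l; rw [List.replicate_succ]; simp [decAux, ih (c+1) l]
                 ring_nf

lemma dec_enc : ∀ ms c, List.Chain (· ≤ ·) c ms → decAux c (encAux c ms) = ms := by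
  intro ms
  induction ms with
  | nil => intro c _; rfl
  | cons m ms ih =>
    intro c hc
    rw [List.Chain, List.chain_cons] at hc
    rw [encAux, dec_replicate, Nat.add_sub_cancel' hc.1, decAux, ih m hc.2]

lemma dec_length : ∀ l c, (decAux c l).length = l.count 0 := by
  intro l
  induction l with
  | nil => intro c; rfl
  | cons x t ih =>
    intro c
    match x with
    | 0 => simp [decAux, ih]
    | (y+1) => simp [decAux, ih]

lemma dec_ge_acc : ∀ l c, ∀ x ∈ decAux c l, c ≤ x := by
  intro l
  induction l with
  | nil => intro c x hx; simp [decAux] at hx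
  | cons a t ih =>
    intro c x hx
    match a with
    | 0 =>
      rw [decAux] at hx
      rcases List.mem_cons.mp hx with h | h
      · omega
      · exact ih c x h
    | (y+1) =>
      rw [decAux] at hx
      exact le_trans (Nat.le_succ c) (ih (c+1) x hx)

lemma enc_dec : ∀ l c, IsWord l → (∀ t, (l.drop t).count 1 ≤ (l.drop t).count 0) →
    encAux c (decAux c l) = l := by
  intro l
  induction l with
  | nil => intro c _ _; rfl
  | cons a t ih =>
    intro c hw hs
    have hwt : IsWord t := fun x hx => hw x (List.mem_cons_of_mem a hx)
    have hst : ∀ t', (t.drop t').count 1 ≤ (t.drop t').count 0 := by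
      intro t'; have := hs (t' + 1); simpa using this
    match a with
    | 0 => rw [decAux, encAux, Nat.sub_self]; simp [ih c hwt hst]
    | 1 =>
      rw [decAux]
      have hne : decAux (c+1) t ≠ [] := by
        have h0 := hs 0
        simp only [List.drop_zero] at h0
        have : t.count 0 ≥ 1 := by
          have h1 : (1 :: t).count 1 = t.count 1 + 1 := by simp
          have h2 : (1 :: t).count 0 = t.count 0 := by simp
          omega
        have := dec_length t (c+1)
        intro h; rw [h] at this; simp at this; omega
      obtain ⟨m, ms, hms⟩ := List.exists_cons_of_ne_nil hne
      have hmge : c + 1 ≤ m := by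
        apply dec_ge_acc t (c+1); rw [hms]; exact List.mem_cons_self
      rw [hms, encAux]
      have : m - c = (m - (c+1)) + 1 := by omega
      rw [this, List.replicate_succ, List.cons_append]
      have := ih (c+1) hwt hst
      rw [hms, encAux] at this
      rw [this]
    | (y+2) =>
      exfalso
      rcases hw (y+2) (List.mem_cons_self) with h | h <;> omega

lemma chain_le_of_le {c c' : ℕ} {l : List ℕ} (h : c ≤ c')
    (hc : List.Chain (· ≤ ·) c' l) : List.Chain (· ≤ ·) c l := by
  cases l with
  | nil => exact List.Chain.nil
  | cons a t =>
    rw [List.Chain, List.chain_cons] at hc ⊢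
    exact ⟨le_trans h hc.1, hc.2⟩

lemma dec_chain : ∀ l c, List.Chain (· ≤ ·) c (decAux c l) := by
  intro l
  induction l with
  | nil => intro c; exact List.Chain.nil
  | cons a t ih =>
    intro c
    match a with
    | 0 => rw [decAux]; exact List.Chain.cons le_rfl (ih c)
    | (y+1) =>
      rw [decAux]
      exact chain_le_of_le (Nat.le_succ c) (ih (c+1))


lemma dec_ge : ∀ l c k, (∀ t, (l.take t).count 0 + k ≤ (l.take t).count 1 + c) →
    ∀ i (h : i < (decAux c l).length), k + i + 1 ≤ (decAux c l).get ⟨i, h⟩ := by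
  intro l
  induction l with
  | nil => intro c k _ i h; simp [decAux] at h
  | cons a t ih =>
    intro c k hp i h
    match a with
    | 0 =>
      have hk : k + 1 ≤ c := by
        have := hp 1
        simp at this
        omega
      match i with
      | 0 => simpa [decAux] using hk
      | (i+1) =>
        simp only [decAux] at h ⊢
        simp only [List.get_cons_succ]
        have : k + 1 + i + 1 ≤ (decAux c t).get ⟨i, by simpa using h⟩ := by
          apply ih c (k+1)
          intro t'
          have := hp (t' + 1)
          simp at this
          omega
        omega
    | (y+1) =>
      simp only [decAux] at h ⊢
      apply ih (c+1) k
      intro t'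
      have := hp (t' + 1)
      simp only [List.take_succ_cons, List.count_cons] at this
      by_cases hy : y = 0 <;> simp [hy] at this <;> omega

lemma dec_le : ∀ l c, IsWord l → ∀ x ∈ decAux c l, x ≤ c + l.count 1 := by
  intro l
  induction l with
  | nil => intro c _ x hx; simp [decAux] at hx
  | cons a t ih =>
    intro c hw x hx
    have hwt : IsWord t := fun y hy => hw y (List.mem_cons_of_mem a hy)
    match a with
    | 0 =>
      rw [decAux] at hx
      rcases List.mem_cons.mp hx with h | h
      · simp [h]
      · have := ih c hwt x h
        simp only [List.count_cons]
        omega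
    | 1 =>
      rw [decAux] at hx
      have := ih (c+1) hwt x hx
      simp [List.count_cons] at *
      omega
    | (y+2) =>
      exfalso
      rcases hw (y+2) (List.mem_cons_self) with h | h <;> omega

lemma word_count : ∀ l, IsWord l → l.count 0 + l.count 1 = l.length := by
  intro l
  induction l with
  | nil => intro _; rfl
  | cons a t ih =>
    intro hw
    have hwt : IsWord t := fun y hy => hw y (List.mem_cons_of_mem a hy)
    have := ih hwt
    rcases hw a (List.mem_cons_self) with h | h <;>
      subst h <;> simp [List.count_cons] <;> omega

lemma enc_isword : ∀ ms c, IsWord (encAux c ms) := by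
  intro ms
  induction ms with
  | nil => intro c x hx; simp [encAux] at hx
  | cons m t ih =>
    intro c x hx
    rw [encAux] at hx
    rcases List.mem_append.mp hx with h | h
    · right; exact (List.eq_of_mem_replicate h)
    · rcases List.mem_cons.mp h with h | h
      · left; exact h
      · exact ih m x h

lemma enc_count0 : ∀ ms c, (encAux c ms).count 0 = ms.length := by
  intro ms
  induction ms with
  | nil => intro c; rfl
  | cons m t ih =>
    intro c
    rw [encAux]
    simp [List.count_append, List.count_replicate, ih]

lemma enc_count1 : ∀ ms c, List.Chain (· ≤ ·) c ms →
    c + (encAux c ms).count 1 = ms.getLastD c := by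
  intro ms
  induction ms with
  | nil => intro c _; rfl
  | cons m t ih =>
    intro c hc
    rw [List.Chain, List.chain_cons] at hc
    rw [encAux, List.getLastD_cons]
    simp only [List.count_append, List.count_replicate, List.count_cons]
    norm_num
    have := ih m hc.2
    simp only [List.getLastD_eq_getLast?] at this
    omega

lemma enc_prefix : ∀ ms c k, List.Chain (· ≤ ·) c ms →
    (∀ i (h : i < ms.length), k + i + 1 ≤ ms.get ⟨i, h⟩) → k ≤ c →
    ∀ t, ((encAux c ms).take t).count 0 + k ≤ ((encAux c ms).take t).count 1 + c := by
  intro ms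
  induction ms with
  | nil => intro c k _ _ hkc t; simp [encAux]; omega
  | cons m t ih =>
    intro c k hc hg hkc s
    rw [List.Chain, List.chain_cons] at hc
    have hm1 : k + 1 ≤ m := by
      have := hg 0 (by simp)
      simpa using this
    rw [encAux]
    rcases le_or_gt s (m - c) with hs | hs
    · rw [List.take_append_of_le_length (by simpa using hs)]
      have h1 : (List.take s (List.replicate (m - c) 1)).count 0 = 0 := by
        rw [List.take_replicate]
        simp [List.count_replicate]
      have h2 : (0:ℕ) ≤ (List.take s (List.replicate (m - c) 1)).count 1 := Nat.zero_le _
      omega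
    · rw [List.take_append, List.take_of_length_le (by simpa using hs.le)]
      simp only [List.count_append, List.count_replicate, List.length_replicate]
      have hsm : s - (m - c) = (s - (m - c) - 1) + 1 := by omega
      rw [hsm, List.take_succ_cons]
      simp only [List.count_cons, beq_iff_eq, if_true, if_pos, reduceIte]
      norm_num
      have := ih m (k+1) hc.2 (by
        intro i h
        have := hg (i+1) (by simpa using h)
        simp only [List.get_cons_succ] at this
        omega) hm1 (s - (m - c) - 1)
      have hcm : c ≤ m := hc.1
      omega


lemma getLastD_of_ne_nil {l : List ℕ} {d : ℕ} (h : l ≠ []) :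
    l.getLastD d = l.getLast h := by
  rw [List.getLastD_eq_getLast?, List.getLast?_eq_getLast h]
  rfl

lemma drop_counts {l : List ℕ} (hcnt : l.count 1 = l.count 0)
    (hpre : ∀ t, (l.take t).count 0 ≤ (l.take t).count 1) :
    ∀ t, (l.drop t).count 1 ≤ (l.drop t).count 0 := by
  intro t
  have h1 : (l.take t).count 1 + (l.drop t).count 1 = l.count 1 := by
    rw [← List.count_append, List.take_append_drop]
  have h0 : (l.take t).count 0 + (l.drop t).count 0 = l.count 0 := by
    rw [← List.count_append, List.take_append_drop]
  have := hpre t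
  omega

variable {n : ℕ}

/-- The set of monotone functions `f : Fin n → Fin n` with `i ≤ f i`. -/
def MSet (n : ℕ) : Type := {f : Fin n → Fin n // Monotone f ∧ ∀ i : Fin n, (i : ℕ) ≤ f i}

/-- Dyck lists of semilength `n`. -/
def ASet (n : ℕ) : Type := {l : List ℕ // IsDyck l ∧ l.length = 2 * n}

lemma count0_eq (x : ASet n) : x.1.count 0 = n := by
  obtain ⟨l, ⟨hw, hcnt, _⟩, hlen⟩ := x
  have := word_count l hw
  simp only at *
  omega

lemma dec_length' (x : ASet n) : (decAux 0 x.1).length = n := by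
  rw [dec_length, count0_eq]

lemma dec_get_lb (x : ASet n) (i : ℕ) (h : i < (decAux 0 x.1).length) :
    i + 1 ≤ (decAux 0 x.1).get ⟨i, h⟩ := by
  have := dec_ge x.1 0 0 (by intro t; simpa using x.2.1.2.2 t) i h
  omega

lemma dec_get_ub (x : ASet n) (i : ℕ) (h : i < (decAux 0 x.1).length) :
    (decAux 0 x.1).get ⟨i, h⟩ ≤ n := by
  have h1 := dec_le x.1 0 x.2.1.1 _ (List.get_mem _ ⟨i, h⟩)
  have h2 : x.1.count 1 = n := by
    have := count0_eq x; have := x.2.1.2.1; omega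
  omega

/-- From Dyck list to monotone subdiagonal function. -/
def dyckToM (x : ASet n) : MSet n := by
  refine ⟨fun i => ⟨(decAux 0 x.1).get ⟨i, by rw [dec_length' x]; exact i.2⟩ - 1, ?_⟩, ?_, ?_⟩
  · have hlb := dec_get_lb x i (by rw [dec_length' x]; exact i.2)
    have hub := dec_get_ub x i (by rw [dec_length' x]; exact i.2)
    have : 0 < n := lt_of_le_of_lt (Nat.zero_le _) i.2
    omega
  · intro i j hij
    rcases eq_or_lt_of_le hij with h | h
    · subst h; exact le_rfl
    · have hp : List.Pairwise (· ≤ ·) (decAux 0 x.1) :=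
        (List.isChain_iff_pairwise.mp (dec_chain x.1 0)).of_cons
      have := (List.pairwise_iff_get.mp hp) ⟨i, by rw [dec_length' x]; exact i.2⟩
        ⟨j, by rw [dec_length' x]; exact j.2⟩ h
      simp only [Fin.mk_le_mk]
      omega
  · intro i
    have := dec_get_lb x i (by rw [dec_length' x]; exact i.2)
    simp only
    omega

/-- The list of (1-based) running maxima from a function. -/
def msOf (f : Fin n → Fin n) : List ℕ := List.ofFn (fun i => (f i : ℕ) + 1)

lemma msOf_length (f : Fin n → Fin n) : (msOf f).length = n := by
  simp [msOf]

lemma msOf_get (f : Fin n → Fin n) (i : ℕ) (h : i < (msOf f).length) :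
    (msOf f).get ⟨i, h⟩ = (f ⟨i, by simpa [msOf_length] using h⟩ : ℕ) + 1 := by
  simp only [msOf, List.get_ofFn]
  congr

lemma msOf_chain (f : Fin n → Fin n) (hmono : Monotone f) :
    List.Chain (· ≤ ·) 0 (msOf f) := by
  rw [List.Chain, List.isChain_iff_pairwise, List.pairwise_cons]
  refine ⟨fun a _ => Nat.zero_le a, ?_⟩
  rw [List.pairwise_iff_get]
  intro i j hij
  rw [msOf_get f i i.2, msOf_get f j j.2]
  have : (⟨(i : ℕ), by simpa [msOf_length] using i.2⟩ : Fin n) ≤ ⟨(j : ℕ), by simpa [msOf_length] using j.2⟩ := le_of_lt hij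
  have := hmono this
  simp only [Fin.le_def] at this ⊢
  omega

lemma msOf_count1 (f : Fin n → Fin n) (hmono : Monotone f)
    (hge : ∀ i : Fin n, (i : ℕ) ≤ f i) : (encAux 0 (msOf f)).count 1 = n := by
  have hc := enc_count1 (msOf f) 0 (msOf_chain f hmono)
  rcases Nat.eq_zero_or_pos n with hn | hn
  · subst hn
    have : msOf f = [] := List.eq_nil_of_length_eq_zero (msOf_length f)
    rw [this] at hc
    rw [this]; rfl
  · have hne : msOf f ≠ [] := by
      intro h
      have := msOf_length f
      rw [h] at this; simp at this; omega
    rw [getLastD_of_ne_nil hne, (List.getLast_eq_getElem hne).trans (List.get_eq_getElem (i := ⟨(msOf f).length - 1, by simp [msOf_length]; omega⟩)).symm, msOf_get] at hc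
    set i : Fin n := ⟨(msOf f).length - 1, by simp [msOf_length]; omega⟩ with hi
    have h1 := hge i
    have h2 := (f i).2
    have h3 : (i : ℕ) = n - 1 := by rw [hi]; simp [msOf_length]
    omega

/-- From monotone subdiagonal function to Dyck list. -/
def mToDyck (y : MSet n) : ASet n := by
  refine ⟨encAux 0 (msOf y.1), ⟨enc_isword _ _, ?_, ?_⟩, ?_⟩
  · rw [msOf_count1 y.1 y.2.1 y.2.2, enc_count0, msOf_length]
  · intro t
    have := enc_prefix (msOf y.1) 0 0 (msOf_chain y.1 y.2.1) (by
      intro i h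
      rw [msOf_get y.1 i h]
      have : (i : ℕ) ≤ (y.1 ⟨i, by simpa [msOf_length] using h⟩ : ℕ) := y.2.2 ⟨i, by simpa [msOf_length] using h⟩
      omega) le_rfl t
    omega
  · have hw := enc_isword (msOf y.1) 0
    have h1 := word_count _ hw
    have h2 := enc_count0 (msOf y.1) 0
    have h3 := msOf_count1 y.1 y.2.1 y.2.2
    rw [msOf_length] at h2
    omega


lemma left_inv_dm (x : ASet n) : mToDyck (dyckToM x) = x := by
  apply Subtype.ext
  show encAux 0 (msOf (dyckToM x).1) = x.1
  have hms : msOf (dyckToM x).1 = decAux 0 x.1 := by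
    apply List.ext_get
    · rw [msOf_length, dec_length' x]
    · intro i h1 h2
      rw [msOf_get]
      have hrfl : ((dyckToM x).1 ⟨i, by simpa [msOf_length] using h1⟩ : ℕ)
          = (decAux 0 x.1).get ⟨i, h2⟩ - 1 := rfl
      rw [hrfl]
      have hlb := dec_get_lb x i h2
      omega
  rw [hms]
  exact enc_dec x.1 0 x.2.1.1 (drop_counts x.2.1.2.1 x.2.1.2.2)

lemma right_inv_dm (y : MSet n) : dyckToM (mToDyck y) = y := by
  apply Subtype.ext
  funext i
  apply Fin.ext
  show (decAux 0 (mToDyck y).1).get _ - 1 = (y.1 i : ℕ)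
  have hdec : decAux 0 (mToDyck y).1 = msOf y.1 :=
    dec_enc (msOf y.1) 0 (msOf_chain y.1 y.2.1)
  have h1 : (decAux 0 (mToDyck y).1).get ⟨(i : ℕ), by rw [dec_length' (mToDyck y)]; exact i.2⟩
      = (msOf y.1).get ⟨(i : ℕ), by rw [msOf_length]; exact i.2⟩ :=
    List.get_of_eq hdec _
  rw [h1, msOf_get]
  simp

def dyckMEquiv (n : ℕ) : ASet n ≃ MSet n where
  toFun := dyckToM
  invFun := mToDyck
  left_inv := left_inv_dm
  right_inv := right_inv_dm



open Finset

variable {n : ℕ}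

/-- Running maximum of a permutation. -/
def runMax (σ : Equiv.Perm (Fin n)) (i : Fin n) : Fin n :=
  ((Finset.Iic i).image σ).max' (Finset.Nonempty.image ⟨i, Finset.mem_Iic.mpr le_rfl⟩ σ)

lemma le_runMax (σ : Equiv.Perm (Fin n)) {j i : Fin n} (h : j ≤ i) : σ j ≤ runMax σ i :=
  Finset.le_max' _ _ (Finset.mem_image_of_mem σ (Finset.mem_Iic.mpr h))

lemma runMax_attained (σ : Equiv.Perm (Fin n)) (i : Fin n) :
    ∃ j, j ≤ i ∧ σ j = runMax σ i := by
  have := Finset.max'_mem ((Finset.Iic i).image σ)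
    (Finset.Nonempty.image ⟨i, Finset.mem_Iic.mpr le_rfl⟩ σ)
  rw [Finset.mem_image] at this
  obtain ⟨j, hj, hje⟩ := this
  exact ⟨j, Finset.mem_Iic.mp hj, hje⟩

lemma runMax_mono (σ : Equiv.Perm (Fin n)) : Monotone (runMax σ) := by
  intro i j hij
  exact Finset.max'_subset _ (Finset.image_subset_image (Finset.Iic_subset_Iic.mpr hij))

lemma runMax_ge (σ : Equiv.Perm (Fin n)) (i : Fin n) : (i : ℕ) ≤ runMax σ i := by
  have hcard : ((Finset.Iic i).image σ).card = (i : ℕ) + 1 := by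
    rw [Finset.card_image_of_injective _ σ.injective, Fin.card_Iic]
  have hsub : (Finset.Iic i).image σ ⊆ Finset.Iic (runMax σ i) := by
    intro x hx
    exact Finset.mem_Iic.mpr (Finset.le_max' _ _ hx)
  have := Finset.card_le_card hsub
  rw [hcard, Fin.card_Iic] at this
  omega

/-- In a 321-avoiding permutation, a non-left-to-right-maximum value is the
smallest value not yet used. -/
lemma min_unused (σ : Equiv.Perm (Fin n)) (hσ : Avoids321 σ) (i : Fin n)
    (hne : σ i ≠ runMax σ i) :
    σ i = (Finset.univ \ (Finset.Iio i).image σ).min'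
      ⟨σ i, by
        rw [Finset.mem_sdiff]
        refine ⟨Finset.mem_univ _, ?_⟩
        rw [Finset.mem_image]
        rintro ⟨j, hj, hje⟩
        have := σ.injective hje
        subst this
        exact absurd (Finset.mem_Iio.mp hj) (lt_irrefl _)⟩ := by
  set S := Finset.univ \ (Finset.Iio i).image σ with hS
  have hmem : σ i ∈ S := by
    rw [hS, Finset.mem_sdiff]
    refine ⟨Finset.mem_univ _, ?_⟩
    rw [Finset.mem_image]
    rintro ⟨j, hj, hje⟩
    have := σ.injective hje
    subst this
    exact absurd (Finset.mem_Iio.mp hj) (lt_irrefl _)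
  have hne' : S.Nonempty := ⟨σ i, hmem⟩
  set v := S.min' hne' with hv
  have hle : v ≤ σ i := Finset.min'_le _ _ hmem
  rcases eq_or_lt_of_le hle with h | h
  · exact h.symm
  · exfalso
    -- v < σ i; v is unused before i, so it appears after i
    set k := σ.symm v with hk
    have hkv : σ k = v := σ.apply_symm_apply v
    have hkmem : v ∈ S := Finset.min'_mem _ _
    have hknot : k ∉ Finset.Iio i := by
      intro hcon
      rw [hS, Finset.mem_sdiff] at hkmem
      exact hkmem.2 (Finset.mem_image.mpr ⟨k, hcon, hkv⟩)
    have hki : i < k := by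
      rcases lt_trichotomy k i with hc | hc | hc
      · exact absurd (Finset.mem_Iio.mpr hc) hknot
      · exfalso; rw [hc] at hkv; rw [hkv] at h; exact lt_irrefl _ h
      · exact hc
    have hlt : σ i < runMax σ i :=
      lt_of_le_of_ne (le_runMax σ le_rfl) hne
    obtain ⟨j, hji, hje⟩ := runMax_attained σ i
    have hjne : j ≠ i := by
      intro hcon; subst hcon; exact hne hje
    have hjlt : j < i := lt_of_le_of_ne hji hjne
    exact hσ ⟨j, i, k, hjlt, hki, by rw [hkv]; exact h, by rw [hje]; exact hlt⟩

lemma runMax_inj (σ τ : Equiv.Perm (Fin n)) (hσ : Avoids321 σ) (hτ : Avoids321 τ)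
    (h : runMax σ = runMax τ) : σ = τ := by
  have key : ∀ i : Fin n, (∀ j, j < i → σ j = τ j) → σ i = τ i := by
    intro i hind
    have himg : (Finset.Iio i).image σ = (Finset.Iio i).image τ := by
      apply Finset.image_congr
      intro j hj
      exact hind j (Finset.mem_Iio.mp hj)
    have hm : runMax σ i = runMax τ i := by rw [h]
    by_cases hc : runMax σ i ∈ (Finset.Iio i).image σ
    · -- σ i is not the running max
      have hσne : σ i ≠ runMax σ i := by
        intro hcon
        obtain ⟨j, hj, hje⟩ := Finset.mem_image.mp hc
        rw [← hcon] at hje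
        have := σ.injective hje
        subst this
        exact absurd (Finset.mem_Iio.mp hj) (lt_irrefl _)
      have hτne : τ i ≠ runMax τ i := by
        intro hcon
        rw [himg, hm] at hc
        obtain ⟨j, hj, hje⟩ := Finset.mem_image.mp hc
        rw [← hcon] at hje
        have := τ.injective hje
        subst this
        exact absurd (Finset.mem_Iio.mp hj) (lt_irrefl _)
      rw [min_unused σ hσ i hσne, min_unused τ hτ i hτne]
      congr 1
      rw [himg]
    · -- the running max is new, so it equals σ i and τ i
      have hIic : Finset.Iic i = insert i (Finset.Iio i) := by
        ext x
        simp [Finset.mem_Iic, Finset.mem_Iio, Finset.mem_insert, le_iff_lt_or_eq, or_comm]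
      have hσi : σ i = runMax σ i := by
        obtain ⟨j, hj, hje⟩ := runMax_attained σ i
        rcases eq_or_lt_of_le hj with hc' | hc'
        · rw [hc'] at hje; exact hje
        · exact absurd (Finset.mem_image.mpr ⟨j, Finset.mem_Iio.mpr hc', hje⟩) hc
      have hτi : τ i = runMax τ i := by
        obtain ⟨j, hj, hje⟩ := runMax_attained τ i
        rcases eq_or_lt_of_le hj with hc' | hc'
        · rw [hc'] at hje; exact hje
        · refine absurd (Finset.mem_image.mpr ⟨j, Finset.mem_Iio.mpr hc', hje⟩) ?_
          rw [← himg, ← hm]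
          exact hc
      rw [hσi, hτi, hm]
  have : ∀ N : ℕ, ∀ i : Fin n, (i : ℕ) ≤ N → σ i = τ i := by
    intro N
    induction N with
    | zero =>
      intro i hi
      apply key
      intro j hj
      exfalso
      have : (j : ℕ) < (i : ℕ) := hj
      omega
    | succ N ih =>
      intro i hi
      apply key
      intro j hj
      apply ih
      have : (j : ℕ) < (i : ℕ) := hj
      omega
  apply Equiv.ext
  intro i
  exact this i i le_rfl


/-! ### Order embedding counting lemmas -/

lemma card_filter_lt_emb (s : Finset (Fin n)) {k : ℕ} (h : s.card = k) (t : Fin k) :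
    (s.filter (· < s.orderEmbOfFin h t)).card = (t : ℕ) := by
  have himg : s.filter (· < s.orderEmbOfFin h t) =
      (Finset.Iio t).image (s.orderEmbOfFin h) := by
    ext x
    simp only [Finset.mem_filter, Finset.mem_image, Finset.mem_Iio]
    constructor
    · rintro ⟨hxs, hxlt⟩
      have hr : x ∈ Set.range (s.orderEmbOfFin h) := by
        rw [Finset.range_orderEmbOfFin]; exact hxs
      obtain ⟨u, hu⟩ := hr
      refine ⟨u, ?_, hu⟩
      rw [← hu] at hxlt
      exact (OrderEmbedding.lt_iff_lt _).mp hxlt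
    · rintro ⟨u, hu, rfl⟩
      exact ⟨Finset.orderEmbOfFin_mem s h u, (OrderEmbedding.lt_iff_lt _).mpr hu⟩
  rw [himg, Finset.card_image_of_injective _ (s.orderEmbOfFin h).injective, Fin.card_Iio]

lemma emb_lt_iff (s : Finset (Fin n)) {k : ℕ} (h : s.card = k) (t : Fin k) (x : Fin n) :
    s.orderEmbOfFin h t < x ↔ (t : ℕ) < (s.filter (· < x)).card := by
  constructor
  · intro hlt
    have hsub : insert (s.orderEmbOfFin h t) (s.filter (· < s.orderEmbOfFin h t)) ⊆
        s.filter (· < x) := by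
      intro y hy
      rcases Finset.mem_insert.mp hy with rfl | hy
      · exact Finset.mem_filter.mpr ⟨Finset.orderEmbOfFin_mem s h t, hlt⟩
      · obtain ⟨h1, h2⟩ := Finset.mem_filter.mp hy
        exact Finset.mem_filter.mpr ⟨h1, lt_trans h2 hlt⟩
    have hnot : s.orderEmbOfFin h t ∉ s.filter (· < s.orderEmbOfFin h t) := by
      intro hcon; exact lt_irrefl _ (Finset.mem_filter.mp hcon).2
    have := Finset.card_le_card hsub
    rw [Finset.card_insert_of_notMem hnot, card_filter_lt_emb s h t] at this
    omega
  · intro hlt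
    by_contra hcon
    push_neg at hcon
    have hsub : s.filter (· < x) ⊆ s.filter (· < s.orderEmbOfFin h t) := by
      intro y hy
      obtain ⟨h1, h2⟩ := Finset.mem_filter.mp hy
      exact Finset.mem_filter.mpr ⟨h1, lt_of_lt_of_le h2 hcon⟩
    have := Finset.card_le_card hsub
    rw [card_filter_lt_emb s h t] at this
    omega

/-! ### Construction of a 321-avoiding permutation from a subdiagonal monotone map -/

/-- `i` is a strict left-to-right maximum position of `m`. -/
def IsJump (m : Fin n → Fin n) (i : Fin n) : Prop := ∀ j, j < i → m j < m i

instance (m : Fin n → Fin n) : DecidablePred (IsJump m) := fun _ =>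
  Fintype.decidableForallFintype

/-- The set of jump positions. -/
def jumps (m : Fin n → Fin n) : Finset (Fin n) := Finset.univ.filter (IsJump m)

/-- The set of non-jump positions. -/
def nonjumps (m : Fin n → Fin n) : Finset (Fin n) :=
  Finset.univ.filter (fun i => ¬ IsJump m i)

/-- The range of `m`. -/
def rng (m : Fin n → Fin n) : Finset (Fin n) := Finset.image m Finset.univ

variable {m : Fin n → Fin n}

lemma exists_jump_le (hm : Monotone m) (i : Fin n) :
    ∃ j, j ≤ i ∧ IsJump m j ∧ m j = m i := by
  have hne : (Finset.univ.filter (fun j => m j = m i)).Nonempty :=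
    ⟨i, Finset.mem_filter.mpr ⟨Finset.mem_univ _, rfl⟩⟩
  set j := (Finset.univ.filter (fun j => m j = m i)).min' hne with hj
  have hjm : m j = m i := (Finset.mem_filter.mp (Finset.min'_mem _ hne)).2
  have hmemi : i ∈ Finset.univ.filter (fun j => m j = m i) :=
    Finset.mem_filter.mpr ⟨Finset.mem_univ _, rfl⟩
  have hji : j ≤ i := Finset.min'_le _ _ hmemi
  refine ⟨j, hji, ?_, hjm⟩
  intro j' hj'
  rcases lt_or_eq_of_le (hm (le_of_lt hj')) with h | h
  · exact h
  · exfalso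
    have hmemj : j' ∈ Finset.univ.filter (fun j => m j = m i) :=
      Finset.mem_filter.mpr ⟨Finset.mem_univ _, by rw [← hjm, h]⟩
    have : j ≤ j' := Finset.min'_le _ _ hmemj
    exact absurd hj' (not_lt.mpr this)

lemma jump_inj {i j : Fin n} (hii : IsJump m i) (hjj : IsJump m j)
    (h : m i = m j) : i = j := by
  rcases lt_trichotomy i j with hc | hc | hc
  · exact absurd (hjj i hc) (by rw [h]; exact lt_irrefl _)
  · exact hc
  · exact absurd (hii j hc) (by rw [h]; exact lt_irrefl _)

lemma image_jumps (hm : Monotone m) : Finset.image m (jumps m) = rng m := by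
  apply Finset.Subset.antisymm
  · intro v hv
    obtain ⟨j, _, hj⟩ := Finset.mem_image.mp hv
    exact Finset.mem_image.mpr ⟨j, Finset.mem_univ _, hj⟩
  · intro v hv
    obtain ⟨i, _, hi⟩ := Finset.mem_image.mp hv
    obtain ⟨j, _, hjump, hjm⟩ := exists_jump_le hm i
    exact Finset.mem_image.mpr ⟨j, Finset.mem_filter.mpr ⟨Finset.mem_univ _, hjump⟩, by rw [hjm, hi]⟩

lemma card_jumps (hm : Monotone m) : (jumps m).card = (rng m).card := by
  rw [← image_jumps hm]
  exact (Finset.card_image_of_injOn (fun a ha b hb h =>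
    jump_inj (Finset.mem_filter.mp ha).2 (Finset.mem_filter.mp hb).2 h)).symm

lemma rng_inter_Iic (hm : Monotone m) (i : Fin n) :
    rng m ∩ Finset.Iic (m i) = Finset.image m (jumps m ∩ Finset.Iic i) := by
  apply Finset.Subset.antisymm
  · intro v hv
    obtain ⟨hv1, hv2⟩ := Finset.mem_inter.mp hv
    obtain ⟨i0, _, hi0⟩ := Finset.mem_image.mp hv1
    obtain ⟨j, _, hjump, hjm⟩ := exists_jump_le hm i0
    have hji : j ≤ i := by
      by_contra hcon
      push_neg at hcon
      have := hjump i hcon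
      rw [hjm, hi0] at this
      exact absurd (Finset.mem_Iic.mp hv2) (not_le.mpr this)
    refine Finset.mem_image.mpr ⟨j, Finset.mem_inter.mpr
      ⟨Finset.mem_filter.mpr ⟨Finset.mem_univ _, hjump⟩, Finset.mem_Iic.mpr hji⟩, ?_⟩
    rw [hjm, hi0]
  · intro v hv
    obtain ⟨j, hj, hjm⟩ := Finset.mem_image.mp hv
    obtain ⟨hj1, hj2⟩ := Finset.mem_inter.mp hj
    refine Finset.mem_inter.mpr ⟨Finset.mem_image.mpr ⟨j, Finset.mem_univ _, hjm⟩, ?_⟩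
    rw [← hjm]
    exact Finset.mem_Iic.mpr (hm (Finset.mem_Iic.mp hj2))

lemma card_rng_inter_Iic (hm : Monotone m) (i : Fin n) :
    (rng m ∩ Finset.Iic (m i)).card = (jumps m ∩ Finset.Iic i).card := by
  rw [rng_inter_Iic hm i]
  exact Finset.card_image_of_injOn (fun a ha b hb h =>
    jump_inj (Finset.mem_filter.mp (Finset.mem_inter.mp ha).1).2
      (Finset.mem_filter.mp (Finset.mem_inter.mp hb).1).2 h)

lemma card_partition_Iic (m : Fin n → Fin n) (i : Fin n) :
    (nonjumps m ∩ Finset.Iic i).card + (jumps m ∩ Finset.Iic i).card = (i : ℕ) + 1 := by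
  have h1 : nonjumps m ∩ Finset.Iic i = (Finset.Iic i).filter (fun j => ¬ IsJump m j) := by
    ext x; simp [nonjumps, Finset.mem_filter, and_comm]
  have h2 : jumps m ∩ Finset.Iic i = (Finset.Iic i).filter (IsJump m) := by
    ext x; simp [jumps, Finset.mem_filter, and_comm]
  rw [h1, h2, ← Fin.card_Iic i]
  rw [add_comm]
  exact Finset.card_filter_add_card_filter_not _

lemma jumps_Iic_nonempty (hm : Monotone m) (i : Fin n) :
    1 ≤ (jumps m ∩ Finset.Iic i).card := by
  obtain ⟨j, hji, hjump, _⟩ := exists_jump_le hm i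
  exact Finset.card_pos.mpr ⟨j, Finset.mem_inter.mpr
    ⟨Finset.mem_filter.mpr ⟨Finset.mem_univ _, hjump⟩, Finset.mem_Iic.mpr hji⟩⟩

lemma card_compl_rng_lt (hm : Monotone m) (i : Fin n) :
    ((rng m)ᶜ.filter (· < m i)).card
      = (m i : ℕ) + 1 - (jumps m ∩ Finset.Iic i).card := by
  have h1 : (rng m)ᶜ.filter (· < m i) = Finset.Iio (m i) \ (rng m ∩ Finset.Iio (m i)) := by
    ext x
    simp only [Finset.mem_filter, Finset.mem_compl, Finset.mem_sdiff, Finset.mem_inter,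
      Finset.mem_Iio]
    tauto
  have h2 : rng m ∩ Finset.Iio (m i) = (rng m ∩ Finset.Iic (m i)).erase (m i) := by
    ext x
    simp only [Finset.mem_inter, Finset.mem_Iio, Finset.mem_erase, Finset.mem_Iic]
    constructor
    · rintro ⟨hx1, hx2⟩
      exact ⟨ne_of_lt hx2, hx1, le_of_lt hx2⟩
    · rintro ⟨hx1, hx2, hx3⟩
      exact ⟨hx2, lt_of_le_of_ne hx3 hx1⟩
  have hmem : m i ∈ rng m ∩ Finset.Iic (m i) :=
    Finset.mem_inter.mpr ⟨Finset.mem_image.mpr ⟨i, Finset.mem_univ _, rfl⟩,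
      Finset.mem_Iic.mpr le_rfl⟩
  have h3 := Finset.card_erase_of_mem hmem
  have h4 := card_rng_inter_Iic hm i
  have h5 : (rng m ∩ Finset.Iio (m i)) ⊆ Finset.Iio (m i) := Finset.inter_subset_right
  rw [h1, Finset.card_sdiff_of_subset h5, Fin.card_Iio, h2, h3, h4]
  have := jumps_Iic_nonempty hm i
  omega

lemma nonjump_mem {i : Fin n} (hni : ¬ IsJump m i) :
    i ∈ nonjumps m ∩ Finset.Iic i :=
  Finset.mem_inter.mpr ⟨Finset.mem_filter.mpr ⟨Finset.mem_univ _, hni⟩, Finset.mem_Iic.mpr le_rfl⟩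

lemma nonjumps_card (hm : Monotone m) : (nonjumps m).card = ((rng m)ᶜ).card := by
  have h1 : (jumps m).card + (nonjumps m).card = n := by
    have := Finset.card_filter_add_card_filter_not (s := (Finset.univ : Finset (Fin n)))
      (p := IsJump m)
    rw [Finset.card_univ, Fintype.card_fin] at this
    exact this
  have h2 : ((rng m)ᶜ).card = n - (rng m).card := by
    rw [Finset.card_compl, Fintype.card_fin]
  have h3 := card_jumps hm
  have h4 : (rng m).card ≤ n := by
    have := Finset.card_le_univ (rng m)
    rwa [Fintype.card_fin] at this
  omega


/-- The 321-avoiding permutation built from a subdiagonal monotone map. -/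
noncomputable def buildFun (hm : Monotone m) : Fin n → Fin n := fun i =>
  if h : IsJump m i then m i
  else (rng m)ᶜ.orderEmbOfFin rfl ⟨(nonjumps m ∩ Finset.Iic i).card - 1, by
    have h1 : 1 ≤ (nonjumps m ∩ Finset.Iic i).card := Finset.card_pos.mpr ⟨i, nonjump_mem h⟩
    have h2 : (nonjumps m ∩ Finset.Iic i).card ≤ (nonjumps m).card :=
      Finset.card_le_card Finset.inter_subset_left
    have h3 := nonjumps_card hm
    omega⟩

lemma buildFun_jump (hm : Monotone m) {i : Fin n} (h : IsJump m i) :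
    buildFun hm i = m i := by
  rw [buildFun, dif_pos h]

lemma buildFun_nonjump_mem (hm : Monotone m) {i : Fin n} (h : ¬ IsJump m i) :
    buildFun hm i ∈ (rng m)ᶜ := by
  rw [buildFun, dif_neg h]
  exact Finset.orderEmbOfFin_mem _ _ _

lemma buildFun_nonjump_lt (hm : Monotone m) (hge : ∀ i : Fin n, (i : ℕ) ≤ m i)
    {i : Fin n} (h : ¬ IsJump m i) : buildFun hm i < m i := by
  rw [buildFun, dif_neg h, emb_lt_iff]
  show (nonjumps m ∩ Finset.Iic i).card - 1 < ((rng m)ᶜ.filter (· < m i)).card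
  rw [card_compl_rng_lt hm i]
  have h6 := card_partition_Iic m i
  have h1 := jumps_Iic_nonempty hm i
  have h2 : 1 ≤ (nonjumps m ∩ Finset.Iic i).card := Finset.card_pos.mpr ⟨i, nonjump_mem h⟩
  have hgei := hge i
  omega

lemma buildFun_le (hm : Monotone m) (hge : ∀ i : Fin n, (i : ℕ) ≤ m i) (i : Fin n) :
    buildFun hm i ≤ m i := by
  by_cases h : IsJump m i
  · rw [buildFun_jump hm h]
  · exact le_of_lt (buildFun_nonjump_lt hm hge h)

lemma nonjumps_card_mono {i j : Fin n} (hnj : ¬ IsJump m j) (hij : i < j) :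
    (nonjumps m ∩ Finset.Iic i).card < (nonjumps m ∩ Finset.Iic j).card := by
  have hsub : insert j (nonjumps m ∩ Finset.Iic i) ⊆ nonjumps m ∩ Finset.Iic j := by
    intro x hx
    rcases Finset.mem_insert.mp hx with rfl | hx
    · exact nonjump_mem hnj
    · obtain ⟨h1, h2⟩ := Finset.mem_inter.mp hx
      exact Finset.mem_inter.mpr ⟨h1, Finset.mem_Iic.mpr
        (le_trans (Finset.mem_Iic.mp h2) (le_of_lt hij))⟩
  have hnotin : j ∉ nonjumps m ∩ Finset.Iic i := by
    intro hcon
    exact absurd (Finset.mem_Iic.mp (Finset.mem_inter.mp hcon).2) (not_le.mpr hij)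
  have := Finset.card_le_card hsub
  rw [Finset.card_insert_of_notMem hnotin] at this
  omega

lemma buildFun_nonjump_mono (hm : Monotone m) {i j : Fin n}
    (hni : ¬ IsJump m i) (hnj : ¬ IsJump m j) (hij : i < j) :
    buildFun hm i < buildFun hm j := by
  simp only [buildFun]
  rw [dif_neg hni, dif_neg hnj]
  apply ((rng m)ᶜ.orderEmbOfFin rfl).strictMono
  rw [Fin.mk_lt_mk]
  have h1 : 1 ≤ (nonjumps m ∩ Finset.Iic i).card := Finset.card_pos.mpr ⟨i, nonjump_mem hni⟩
  have := nonjumps_card_mono hnj hij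
  omega

lemma buildFun_inj (hm : Monotone m) : Function.Injective (buildFun hm) := by
  intro i j h
  by_cases hi : IsJump m i <;> by_cases hj : IsJump m j
  · exact jump_inj hi hj (by rw [← buildFun_jump hm hi, ← buildFun_jump hm hj, h])
  · exfalso
    have h1 : buildFun hm i ∈ rng m := by
      rw [buildFun_jump hm hi]
      exact Finset.mem_image.mpr ⟨i, Finset.mem_univ _, rfl⟩
    have h2 := buildFun_nonjump_mem hm hj
    rw [← h] at h2
    exact absurd h1 (Finset.mem_compl.mp h2)
  · exfalso
    have h1 : buildFun hm j ∈ rng m := by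
      rw [buildFun_jump hm hj]
      exact Finset.mem_image.mpr ⟨j, Finset.mem_univ _, rfl⟩
    have h2 := buildFun_nonjump_mem hm hi
    rw [h] at h2
    exact absurd h1 (Finset.mem_compl.mp h2)
  · by_contra hne
    rcases lt_or_gt_of_ne hne with hc | hc
    · exact absurd h (ne_of_lt (buildFun_nonjump_mono hm hi hj hc))
    · exact absurd h.symm (ne_of_lt (buildFun_nonjump_mono hm hj hi hc))

/-- The constructed permutation. -/
noncomputable def buildPerm (hm : Monotone m) : Equiv.Perm (Fin n) :=
  Equiv.ofBijective _ (Finite.injective_iff_bijective.mp (buildFun_inj hm))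

lemma buildPerm_apply (hm : Monotone m) (i : Fin n) : buildPerm hm i = buildFun hm i := rfl

lemma buildPerm_avoids (hm : Monotone m) (hge : ∀ i : Fin n, (i : ℕ) ≤ m i) :
    Avoids321 (buildPerm hm) := by
  rintro ⟨i, j, k, hij, hjk, h1, h2⟩
  rw [buildPerm_apply, buildPerm_apply] at h1 h2
  by_cases hj : IsJump m j
  · have hc : buildFun hm i ≤ buildFun hm j := by
      rw [buildFun_jump hm hj]
      exact le_trans (buildFun_le hm hge i) (hm (le_of_lt hij))
    exact absurd h2 (not_lt.mpr hc)
  · by_cases hk : IsJump m k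
    · have hc : buildFun hm j ≤ buildFun hm k := by
        rw [buildFun_jump hm hk]
        exact le_trans (le_of_lt (buildFun_nonjump_lt hm hge hj)) (hm (le_of_lt hjk))
      exact absurd h1 (not_lt.mpr hc)
    · exact absurd h1 (not_lt.mpr (le_of_lt (buildFun_nonjump_mono hm hj hk hjk)))

lemma buildPerm_runMax (hm : Monotone m) (hge : ∀ i : Fin n, (i : ℕ) ≤ m i) :
    runMax (buildPerm hm) = m := by
  funext i
  apply le_antisymm
  · apply Finset.max'_le
    intro y hy
    obtain ⟨j, hj, rfl⟩ := Finset.mem_image.mp hy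
    rw [buildPerm_apply]
    exact le_trans (buildFun_le hm hge j) (hm (Finset.mem_Iic.mp hj))
  · obtain ⟨j, hji, hjump, hjm⟩ := exists_jump_le hm i
    have hval : buildPerm hm j = m i := by
      rw [buildPerm_apply, buildFun_jump hm hjump, hjm]
    rw [← hval]
    exact le_runMax _ hji

end Dyck321

open Dyck321 in
theorem dyck_equiv_avoids321 (n : ℕ) :
    Nonempty ({l : List ℕ // IsDyck l ∧ l.length = 2 * n} ≃
      {σ : Equiv.Perm (Fin n) // Avoids321 σ}) := by
  have hfinM : Finite (MSet n) := by unfold MSet; exact Subtype.finite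
  have hfinA : Finite {l : List ℕ // IsDyck l ∧ l.length = 2 * n} :=
    Finite.of_equiv _ (dyckMEquiv n).symm
  have hfinB : Finite {σ : Equiv.Perm (Fin n) // Avoids321 σ} := Subtype.finite
  have h1 : Nat.card {l : List ℕ // IsDyck l ∧ l.length = 2 * n} = Nat.card (MSet n) :=
    Nat.card_congr (dyckMEquiv n)
  have h2 : Nat.card (MSet n) ≤ Nat.card {σ : Equiv.Perm (Fin n) // Avoids321 σ} := by
    apply Nat.card_le_card_of_injective
      (fun y : MSet n => (⟨buildPerm y.2.1, buildPerm_avoids y.2.1 y.2.2⟩ :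
        {σ : Equiv.Perm (Fin n) // Avoids321 σ}))
    intro y1 y2 h
    have hperm : buildPerm y1.2.1 = buildPerm y2.2.1 := congrArg Subtype.val h
    apply Subtype.ext
    rw [← buildPerm_runMax y1.2.1 y1.2.2, ← buildPerm_runMax y2.2.1 y2.2.2, hperm]
  have h3 : Nat.card {σ : Equiv.Perm (Fin n) // Avoids321 σ} ≤ Nat.card (MSet n) := by
    apply Nat.card_le_card_of_injective
      (fun s : {σ : Equiv.Perm (Fin n) // Avoids321 σ} =>
        (⟨runMax s.1, runMax_mono s.1, runMax_ge s.1⟩ : MSet n))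
    intro s1 s2 h
    have hrm : runMax s1.1 = runMax s2.1 := congrArg Subtype.val h
    exact Subtype.ext (runMax_inj s1.1 s2.1 s1.2 s2.2 hrm)
  exact Finite.card_eq.mp (by omega)
end

section
/- A permutation of {1,...,n} is the disjoint union of two increasing subsequences if and only if it is 321-avoiding. -/
/-- A permutation is a disjoint union of two increasing subsequences iff it is
321-avoiding. -/
theorem two_increasing_iff_avoids321 {n : ℕ} (σ : Equiv.Perm (Fin n)) :
    (∃ S : Set (Fin n),
      (∀ i j : Fin n, i ∈ S → j ∈ S → i < j → σ i < σ j) ∧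
      (∀ i j : Fin n, i ∉ S → j ∉ S → i < j → σ i < σ j)) ↔ Avoids321 σ := by
  constructor
  · rintro ⟨S, hS, hSc⟩ ⟨i, j, k, hij, hjk, hkj, hji⟩
    by_cases hi : i ∈ S <;> by_cases hj : j ∈ S <;> by_cases hk : k ∈ S
    · exact absurd (hS i j hi hj hij) (not_lt_of_gt hji)
    · exact absurd (hS i j hi hj hij) (not_lt_of_gt hji)
    · exact absurd (hS i k hi hk (hij.trans hjk)) (not_lt_of_gt (hkj.trans hji))
    · exact absurd (hSc j k hj hk hjk) (not_lt_of_gt hkj)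
    · exact absurd (hS j k hj hk hjk) (not_lt_of_gt hkj)
    · exact absurd (hSc i k hi hk (hij.trans hjk)) (not_lt_of_gt (hkj.trans hji))
    · exact absurd (hSc i j hi hj hij) (not_lt_of_gt hji)
    · exact absurd (hSc i j hi hj hij) (not_lt_of_gt hji)
  · intro hav
    refine ⟨{i | ∀ j, j < i → σ j < σ i}, ?_, ?_⟩
    · intro i j hi hj hij
      exact hj i hij
    · intro i j hi hj hij
      simp only [Set.mem_setOf_eq, not_forall] at hi
      obtain ⟨i', hi'lt, hi'⟩ := hi
      have h1 : σ i < σ i' := by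
        rcases lt_or_eq_of_le (not_lt.mp hi') with h | h
        · exact h
        · exact absurd (σ.injective h).symm (ne_of_lt hi'lt)
      by_contra hle
      rcases lt_or_eq_of_le (not_lt.mp hle) with h | h
      · exact hav ⟨i', i, j, hi'lt, hij, h, h1⟩
      · exact (ne_of_lt hij) (σ.injective h.symm)
end
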